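/- arXiv:1710.07507 — 4 statements merged into one kernel-verified Lean document; each statement's English description precedes it below -/
import Mathlib

section
/- Let G be a connected graph with at least three vertices and let u, v, w be three distinct vertices of G. Then u, v, w have at least one median if and only if the set S = {u,v,w} satisfies 2·d(S) = d(u,v) + d(u,w) + d(v,w). -/
/-!
By the triangle inequality, `d(u,v) + d(u,w) + d(v,w) ≤ 2 (d(z,u) + d(z,v) + d(z,w))` for every
vertex `z`, with equality exactly when `z` is a median. On the other hand `d({u,v,w})` is the
minimum over `z` of `d(z,u) + d(z,v) + d(z,w)`: the union of geodesics from `z` to `u`, `v`, `w`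
is a connected subgraph containing them, and conversely a connected subgraph realizing
`d({u,v,w})` contains a vertex whose three distances inside it add up to at most its number of
edges.
-/

open Finset SimpleGraph Polynomial

/-- The Steiner distance of a vertex set `S`: the minimum number of edges of a
connected subgraph of `G` whose vertex set contains `S`. -/
noncomputable def steinerDist {V : Type*} (G : SimpleGraph V) (S : Set V) : ℕ :=
  sInf {n | ∃ H : G.Subgraph, H.Connected ∧ S ⊆ H.verts ∧ H.edgeSet.ncard = n}

/-- The Steiner `k`-Wiener index. -/
noncomputable def SW {V : Type*} [Fintype V] [DecidableEq V] (k : ℕ) (G : SimpleGraph V) : ℕ :=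
  ∑ S ∈ Finset.powersetCard k (Finset.univ : Finset V), steinerDist G (S : Set V)

/-- The Steiner `k`-hyper-Wiener index. -/
noncomputable def SWW {V : Type*} [Fintype V] [DecidableEq V] (k : ℕ) (G : SimpleGraph V) : ℝ :=
  (1/2) * ∑ S ∈ Finset.powersetCard k (Finset.univ : Finset V), (steinerDist G (S : Set V) : ℝ)
    + (1/2) * ∑ S ∈ Finset.powersetCard k (Finset.univ : Finset V), (steinerDist G (S : Set V) : ℝ) ^ 2

/-- The Steiner `k`-Hosoya polynomial `∑_{m ≥ 0} d_k(G,m) x^m`, written as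
`∑_{S ⊆ V(G), |S| = k} x^{d(S)}`. -/
noncomputable def SH {V : Type*} [Fintype V] [DecidableEq V] (k : ℕ) (G : SimpleGraph V) :
    Polynomial ℝ :=
  ∑ S ∈ Finset.powersetCard k (Finset.univ : Finset V), Polynomial.X ^ (steinerDist G (S : Set V))

/-- The Wiener index `W(G) = ∑_{{u,v} ⊆ V(G)} d(u,v)` (each unordered pair counted once). -/
noncomputable def wiener {V : Type*} [Fintype V] [DecidableEq V] (G : SimpleGraph V) : ℝ :=
  (∑ p ∈ Finset.univ.offDiag, (G.dist p.1 p.2 : ℝ)) / 2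

/-- `\overline{WW}(G) = ∑_{{u,v} ⊆ V(G)} d(u,v)²`. -/
noncomputable def WWbar {V : Type*} [Fintype V] [DecidableEq V] (G : SimpleGraph V) : ℝ :=
  (∑ p ∈ Finset.univ.offDiag, (G.dist p.1 p.2 : ℝ) ^ 2) / 2

/-- The set of ordered triples of pairwise distinct vertices. -/
def O3 (V : Type*) [Fintype V] [DecidableEq V] : Finset (V × V × V) :=
  Finset.univ.filter fun t => t.1 ≠ t.2.1 ∧ t.1 ≠ t.2.2 ∧ t.2.1 ≠ t.2.2

/-- `\widehat{WW}(G) = ∑_{(u,v,w) ∈ O₃(G)} d(u,v)·d(u,w)`. -/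
noncomputable def WWhat {V : Type*} [Fintype V] [DecidableEq V] (G : SimpleGraph V) : ℝ :=
  ∑ t ∈ O3 V, (G.dist t.1 t.2.1 : ℝ) * (G.dist t.1 t.2.2 : ℝ)

/-- `z` is a median of the triple `u, v, w`: it lies on a shortest `u,v`-path, a shortest
`u,w`-path and a shortest `v,w`-path. -/
def IsMedian {V : Type*} (G : SimpleGraph V) (u v w z : V) : Prop :=
  G.dist u z + G.dist z v = G.dist u v ∧
  G.dist u z + G.dist z w = G.dist u w ∧
  G.dist v z + G.dist z w = G.dist v w

/-- A modular graph: a connected graph in which every triple of vertices has a median. -/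
def IsModular {V : Type*} (G : SimpleGraph V) : Prop :=
  G.Connected ∧ ∀ u v w : V, ∃ z : V, IsMedian G u v w z

/-- The hypercube graph `Q_n` on `Fin n → Bool`: two vertices are adjacent iff they differ
in exactly one coordinate. -/
def hypercubeGraph (n : ℕ) : SimpleGraph (Fin n → Bool) :=
  SimpleGraph.fromRel fun x y => ∃! i, x i ≠ y i

/-- A partial cube: a connected graph isometrically embeddable into a hypercube. -/
def IsPartialCube {V : Type*} (G : SimpleGraph V) : Prop :=
  G.Connected ∧ ∃ (n : ℕ) (f : V → (Fin n → Bool)),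
    ∀ u v : V, (hypercubeGraph n).dist (f u) (f v) = G.dist u v

/-- The Djoković–Winkler relation Θ on (edges viewed as) unordered pairs:
`s(u₁,v₁) Θ s(u₂,v₂)` iff `d(u₁,u₂) + d(v₁,v₂) ≠ d(u₁,v₂) + d(v₁,u₂)`. -/
def theta {V : Type*} (G : SimpleGraph V) (e f : Sym2 V) : Prop :=
  ∃ u₁ v₁ u₂ v₂ : V, e = s(u₁, v₁) ∧ f = s(u₂, v₂) ∧
    G.dist u₁ u₂ + G.dist v₁ v₂ ≠ G.dist u₁ v₂ + G.dist v₁ u₂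

/-- `E` together with the component data `U`, `U'` is the family of Θ-classes of the
partial cube `G`: each `E i` is a Θ-class of edges, the classes are pairwise distinct and
cover the edge set, and `U i`, `U' i` are (the vertex sets of) the two connected components
of `G - E i`. -/
def IsThetaClassSetup {V : Type*} (G : SimpleGraph V) (d : ℕ)
    (E : Fin d → Set (Sym2 V)) (U U' : Fin d → Set V) : Prop :=
  (∀ i, ∃ e ∈ G.edgeSet, E i = {f | f ∈ G.edgeSet ∧ theta G f e}) ∧
  Function.Injective E ∧
  G.edgeSet = ⋃ i, E i ∧
  ∀ i, ∃ c c' : (G.deleteEdges (E i)).ConnectedComponent, c ≠ c' ∧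
    U i = c.supp ∧ U' i = c'.supp ∧
    ∀ b : (G.deleteEdges (E i)).ConnectedComponent, b = c ∨ b = c'

namespace SimpleGraph

variable {V : Type*} {G : SimpleGraph V}

namespace Walk

lemma ncard_edgeSet_le_length {u v : V} (p : G.Walk u v) : p.edgeSet.ncard ≤ p.length := by
  classical
  rw [← coe_edges_toFinset, Set.ncard_coe_finset, ← length_edges]
  exact List.toFinset_card_le _

lemma IsTrail.ncard_edgeSet {u v : V} {p : G.Walk u v} (hp : p.IsTrail) :
    p.edgeSet.ncard = p.length := by
  classical
  rw [← coe_edges_toFinset, Set.ncard_coe_finset, List.toFinset_card_of_nodup hp.edges_nodup,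
    length_edges]

lemma dist_add_dist_le_length_of_mem_support {u v w : V} (p : G.Walk u v) (hw : w ∈ p.support) :
    G.dist u w + G.dist w v ≤ p.length := by
  classical
  have hsplit := congrArg length (p.take_spec hw)
  rw [length_append] at hsplit
  have := dist_le (p.takeUntil w hw)
  have := dist_le (p.dropUntil w hw)
  omega

lemma disjoint_edgeSet_of_support_inter_subsingleton {u v u' v' : V} (p : G.Walk u v)
    (q : G.Walk u' v') (h : {x | x ∈ p.support ∧ x ∈ q.support}.Subsingleton) :
    Disjoint p.edgeSet q.edgeSet := by
  rw [Set.disjoint_left]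
  intro e hep heq
  induction e using Sym2.ind with
  | _ a b =>
    exact (q.adj_of_mem_edges heq).ne <| h
      ⟨p.fst_mem_support_of_mem_edges hep, q.fst_mem_support_of_mem_edges heq⟩
      ⟨p.snd_mem_support_of_mem_edges hep, q.snd_mem_support_of_mem_edges heq⟩

lemma eq_start_of_mem_support_of_forall_dist_le {s : Set V} {p w x : V}
    (hclosest : ∀ y ∈ s, G.dist p w ≤ G.dist y w) {q : G.Walk p w}
    (hq : q.length = G.dist p w) (hxq : x ∈ q.support) (hxs : x ∈ s) : x = p := by
  classical
  by_contra hxp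
  have := dist_le (q.dropUntil x hxq)
  have := length_dropUntil_lt_length hxq hxp
  have := hclosest x hxs
  omega

end Walk

lemma Subgraph.Connected.dist_le_dist_coe {H : G.Subgraph} (hH : H.Connected) (a b : H.verts) :
    G.dist a b ≤ H.coe.dist a b := by
  obtain ⟨p, hp⟩ := hH.coe.exists_walk_length_eq_dist a b
  exact (dist_le (p.map H.hom)).trans_eq ((Walk.length_map H.hom p).trans hp)

lemma Subgraph.ncard_edgeSet_coe (H : G.Subgraph) : H.coe.edgeSet.ncard = H.edgeSet.ncard := by
  rw [← H.image_coe_edgeSet_coe]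
  exact (Set.ncard_image_of_injective _ (Sym2.map.injective Subtype.val_injective)).symm

theorem Connected.exists_dist_add_dist_add_dist_le_ncard_edgeSet [Finite V] (hG : G.Connected)
    (u v w : V) : ∃ p, G.dist p u + G.dist p v + G.dist p w ≤ G.edgeSet.ncard := by
  classical
  -- A shortest `u,v`-path `P` and a shortest path `Q` from the vertex `p` of `P` closest to `w`
  -- are edge-disjoint.
  obtain ⟨P, hP, -⟩ := hG.exists_path_of_dist u v
  obtain ⟨p, hpP, hclosest⟩ := P.support.toFinset.exists_min_image (G.dist · w)
    ⟨u, List.mem_toFinset.2 P.start_mem_support⟩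
  rw [List.mem_toFinset] at hpP
  obtain ⟨Q, hQ, hQlen⟩ := hG.exists_path_of_dist p w
  have hmeet_eq : ∀ x, x ∈ P.support → x ∈ Q.support → x = p := fun x hxP hxQ =>
    Walk.eq_start_of_mem_support_of_forall_dist_le (s := {x | x ∈ P.support})
      (fun y hy => hclosest y (List.mem_toFinset.2 hy)) hQlen hxQ hxP
  have hmeet : {x | x ∈ P.support ∧ x ∈ Q.support}.Subsingleton := fun x hx y hy =>
    (hmeet_eq x hx.1 hx.2).trans (hmeet_eq y hy.1 hy.2).symm
  refine ⟨p, ?_⟩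
  calc G.dist p u + G.dist p v + G.dist p w ≤ P.length + Q.length := by
        rw [dist_comm (u := p)]
        have := P.dist_add_dist_le_length_of_mem_support hpP
        omega
    _ = (P.edgeSet ∪ Q.edgeSet).ncard := by
        rw [Set.ncard_union_eq (P.disjoint_edgeSet_of_support_inter_subsingleton Q hmeet),
          hP.isTrail.ncard_edgeSet, hQ.isTrail.ncard_edgeSet]
    _ ≤ G.edgeSet.ncard := Set.ncard_le_ncard
        (Set.union_subset P.edges_subset_edgeSet Q.edges_subset_edgeSet) (Set.toFinite _)

lemma Connected.dist_add_dist_add_dist_le_two_mul (hG : G.Connected) (u v w z : V) :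
    G.dist u v + G.dist u w + G.dist v w ≤ 2 * (G.dist z u + G.dist z v + G.dist z w) := by
  have := hG.dist_triangle (u := u) (v := z) (w := v)
  have := hG.dist_triangle (u := u) (v := z) (w := w)
  have := hG.dist_triangle (u := v) (v := z) (w := w)
  have := G.dist_comm (u := u) (v := z)
  have := G.dist_comm (u := v) (v := z)
  omega

lemma Connected.isMedian_iff (hG : G.Connected) {u v w z : V} :
    IsMedian G u v w z ↔
      G.dist u v + G.dist u w + G.dist v w = 2 * (G.dist z u + G.dist z v + G.dist z w) := by
  have := hG.dist_triangle (u := u) (v := z) (w := v)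
  have := hG.dist_triangle (u := u) (v := z) (w := w)
  have := hG.dist_triangle (u := v) (v := z) (w := w)
  have := G.dist_comm (u := u) (v := z)
  have := G.dist_comm (u := v) (v := z)
  rw [IsMedian]
  omega

lemma steinerDist_le_ncard_edgeSet {S : Set V} {H : G.Subgraph} (hH : H.Connected)
    (hS : S ⊆ H.verts) : steinerDist G S ≤ H.edgeSet.ncard :=
  Nat.sInf_le ⟨H, hH, hS, rfl⟩

lemma Connected.exists_subgraph_ncard_edgeSet_eq_steinerDist (hG : G.Connected) (S : Set V) :
    ∃ H : G.Subgraph, H.Connected ∧ S ⊆ H.verts ∧ H.edgeSet.ncard = steinerDist G S := by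
  have htop : (⊤ : G.Subgraph).Connected :=
    Subgraph.connected_iff'.2 (Subgraph.topIso.connected_iff.2 hG)
  exact Nat.sInf_mem
    (s := {n | ∃ H : G.Subgraph, H.Connected ∧ S ⊆ H.verts ∧ H.edgeSet.ncard = n})
    ⟨_, ⊤, htop, Set.subset_univ S, rfl⟩

lemma Connected.steinerDist_le_dist_add_dist_add_dist (hG : G.Connected) (u v w z : V) :
    steinerDist G {u, v, w} ≤ G.dist z u + G.dist z v + G.dist z w := by
  obtain ⟨Pu, hPu⟩ := hG.exists_walk_length_eq_dist z u
  obtain ⟨Pv, hPv⟩ := hG.exists_walk_length_eq_dist z v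
  obtain ⟨Pw, hPw⟩ := hG.exists_walk_length_eq_dist z w
  have hconn : (Pu.toSubgraph ⊔ (Pv.toSubgraph ⊔ Pw.toSubgraph)).Connected :=
    Subgraph.connected_sup Pu.toSubgraph_connected.preconnected
      (Subgraph.connected_sup Pv.toSubgraph_connected.preconnected
        Pw.toSubgraph_connected.preconnected
        ⟨z, Pv.start_mem_verts_toSubgraph, Pw.start_mem_verts_toSubgraph⟩).preconnected
      ⟨z, Pu.start_mem_verts_toSubgraph, Or.inl Pv.start_mem_verts_toSubgraph⟩
  have hS : {u, v, w} ⊆ (Pu.toSubgraph ⊔ (Pv.toSubgraph ⊔ Pw.toSubgraph)).verts := by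
    rintro x (rfl | rfl | rfl)
    · exact Or.inl Pu.end_mem_verts_toSubgraph
    · exact Or.inr (Or.inl Pv.end_mem_verts_toSubgraph)
    · exact Or.inr (Or.inr Pw.end_mem_verts_toSubgraph)
  refine (steinerDist_le_ncard_edgeSet hconn hS).trans ?_
  rw [Subgraph.edgeSet_sup, Subgraph.edgeSet_sup, Walk.edgeSet_toSubgraph,
    Walk.edgeSet_toSubgraph, Walk.edgeSet_toSubgraph]
  calc (Pu.edgeSet ∪ (Pv.edgeSet ∪ Pw.edgeSet)).ncard
      ≤ Pu.edgeSet.ncard + (Pv.edgeSet.ncard + Pw.edgeSet.ncard) :=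
        (Set.ncard_union_le _ _).trans (Nat.add_le_add_left (Set.ncard_union_le _ _) _)
    _ ≤ Pu.length + (Pv.length + Pw.length) :=
        add_le_add Pu.ncard_edgeSet_le_length
          (add_le_add Pv.ncard_edgeSet_le_length Pw.ncard_edgeSet_le_length)
    _ = G.dist z u + G.dist z v + G.dist z w := by rw [hPu, hPv, hPw, add_assoc]

lemma Connected.exists_dist_add_dist_add_dist_le_steinerDist [Finite V] (hG : G.Connected)
    (u v w : V) : ∃ p, G.dist p u + G.dist p v + G.dist p w ≤ steinerDist G {u, v, w} := by
  obtain ⟨H, hH, hS, hcard⟩ := hG.exists_subgraph_ncard_edgeSet_eq_steinerDist {u, v, w}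
  let u' : H.verts := ⟨u, hS (by simp)⟩
  let v' : H.verts := ⟨v, hS (by simp)⟩
  let w' : H.verts := ⟨w, hS (by simp)⟩
  obtain ⟨p, hp⟩ := hH.coe.exists_dist_add_dist_add_dist_le_ncard_edgeSet u' v' w'
  refine ⟨p, ?_⟩
  calc G.dist p u + G.dist p v + G.dist p w
      ≤ H.coe.dist p u' + H.coe.dist p v' + H.coe.dist p w' :=
        add_le_add (add_le_add (hH.dist_le_dist_coe p u') (hH.dist_le_dist_coe p v'))
          (hH.dist_le_dist_coe p w')
    _ ≤ H.coe.edgeSet.ncard := hp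
    _ = steinerDist G {u, v, w} := by rw [H.ncard_edgeSet_coe, hcard]

end SimpleGraph

theorem median_iff_steiner_dist_general
    {V : Type*} [Fintype V] (G : SimpleGraph V)
    (hG : G.Connected)
    (u v w : V) :
    (∃ z : V, IsMedian G u v w z) ↔
      2 * steinerDist G {u, v, w} = G.dist u v + G.dist u w + G.dist v w := by
  obtain ⟨p, hp⟩ := hG.exists_dist_add_dist_add_dist_le_steinerDist u v w
  have hpairwise := hG.dist_add_dist_add_dist_le_two_mul u v w p
  constructor
  · rintro ⟨z, hz⟩
    have := hG.isMedian_iff.1 hz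
    have := hG.steinerDist_le_dist_add_dist_add_dist u v w z
    omega
  · intro h
    exact ⟨p, hG.isMedian_iff.2 (by omega)⟩

/-- In a connected graph with at least three vertices, three distinct vertices `u, v, w`
have a median iff `2·d({u,v,w}) = d(u,v) + d(u,w) + d(v,w)`. -/
theorem median_iff_steiner_dist
    {V : Type*} [Fintype V] [DecidableEq V] (G : SimpleGraph V)
    (hG : G.Connected) (hV : 3 ≤ Fintype.card V)
    (u v w : V) (huv : u ≠ v) (huw : u ≠ w) (hvw : v ≠ w) :
    (∃ z : V, IsMedian G u v w z) ↔
      2 * steinerDist G {u, v, w} = G.dist u v + G.dist u w + G.dist v w :=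
  median_iff_steiner_dist_general G hG u v w
end

section
/- Let G be a modular graph with at least three vertices. Then SWW_3(G) = ((|V(G)|−2)/4)·W(G) + ((|V(G)|−2)/8)·\overline{WW}(G) + (1/8)·\widehat{WW}(G). -/
open Finset SimpleGraph Polynomial

/-! A median `z` of `u, v, w` joins them by three geodesics whose lengths sum to half the
perimeter `d(u,v) + d(u,w) + d(v,w)`. Conversely, a connected subgraph containing `u, v, w`
contains a geodesic `u,v`-path `p` and, from `w` to a vertex of `p` nearest to `w`, a path
meeting `p` only at its end; these edge-disjoint paths show it has at least half the
perimeter many edges. Hence in a modular graph `2 d({u,v,w})` is the perimeter, and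
expanding `d + d²` over the six orderings of each triple yields the three indices. -/

namespace SimpleGraph

variable {V : Type*} {G : SimpleGraph V}

theorem Walk.dist_add_dist_le_length {u v x : V} (p : G.Walk u v) (hx : x ∈ p.support) :
    G.dist u x + G.dist x v ≤ p.length := by
  classical
  have hsplit := congr_arg Walk.length (p.take_spec hx)
  rw [Walk.length_append] at hsplit
  have := dist_le (p.takeUntil x hx)
  have := dist_le (p.dropUntil x hx)
  omega

theorem Walk.edges_disjoint_of_support_inter {u v u' v' x : V} (p : G.Walk u v)
    (q : G.Walk u' v') (h : ∀ y ∈ p.support, y ∈ q.support → y = x) :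
    p.edges.Disjoint q.edges := by
  intro e hp hq
  induction e with
  | h a b =>
    have ha := h a (p.fst_mem_support_of_mem_edges hp) (q.fst_mem_support_of_mem_edges hq)
    have hb := h b (p.snd_mem_support_of_mem_edges hp) (q.snd_mem_support_of_mem_edges hq)
    subst ha hb
    exact G.loopless.irrefl _ (p.adj_of_mem_edges hp)

theorem Walk.IsTrail.length_add_length_le_ncard {u v u' v' : V} {p : G.Walk u v}
    {q : G.Walk u' v'} (hp : p.IsTrail) (hq : q.IsTrail) (hpq : p.edges.Disjoint q.edges)
    (hfin : G.edgeSet.Finite) : p.length + q.length ≤ G.edgeSet.ncard := by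
  classical
  have hnodup : (p.edges ++ q.edges).Nodup := hp.edges_nodup.append hq.edges_nodup hpq
  calc p.length + q.length = (p.edges ++ q.edges).toFinset.card := by
        rw [List.toFinset_card_of_nodup hnodup, List.length_append, p.length_edges, q.length_edges]
    _ = ((p.edges ++ q.edges).toFinset : Set (Sym2 V)).ncard := (Set.ncard_coe_finset _).symm
    _ ≤ G.edgeSet.ncard := Set.ncard_le_ncard (fun e he => by
        simp only [List.coe_toFinset, List.mem_append, Set.mem_ofPred_eq] at he
        exact he.elim (p.edges_subset_edgeSet ·) (q.edges_subset_edgeSet ·)) hfin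

theorem Walk.ncard_edgeSet_toSubgraph_le {u v : V} (p : G.Walk u v) :
    p.toSubgraph.edgeSet.ncard ≤ p.length := by
  classical
  have hedges : p.toSubgraph.edgeSet = (p.edges.toFinset : Set (Sym2 V)) := by
    ext; simp [Walk.edgeSet_toSubgraph]
  rw [hedges, Set.ncard_coe_finset, ← p.length_edges]
  exact List.toFinset_card_le _

theorem Reachable.dist_map_le {W : Type*} {G' : SimpleGraph W} (f : G →g G') {a b : V}
    (h : G.Reachable a b) : G'.dist (f a) (f b) ≤ G.dist a b := by
  obtain ⟨p, -, hp⟩ := h.exists_path_of_dist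
  calc G'.dist (f a) (f b) ≤ (p.map f).length := dist_le _
    _ = G.dist a b := by rw [p.length_map, hp]

theorem Connected.exists_path_meeting_support_at {u v : V} (hc : G.Connected) (p : G.Walk u v)
    (w : V) : ∃ x ∈ p.support, ∃ q : G.Walk w x, q.IsPath ∧
      ∀ y ∈ p.support, y ∈ q.support → y = x := by
  classical
  obtain ⟨x, hx, hmin⟩ :=
    p.support.toFinset.exists_min_image (G.dist w) ⟨u, by simp⟩
  rw [List.mem_toFinset] at hx
  obtain ⟨q, hq, hql⟩ := hc.exists_path_of_dist w x
  refine ⟨x, hx, q, hq, fun y hyp hyq => hc.dist_eq_zero_iff.mp ?_⟩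
  have := q.dist_add_dist_le_length hyq
  have := hmin y (List.mem_toFinset.mpr hyp)
  omega

theorem Connected.dist_add_dist_add_dist_le_two_mul_ncard (hc : G.Connected)
    (hfin : G.edgeSet.Finite) (u v w : V) :
    G.dist u v + G.dist u w + G.dist v w ≤ 2 * G.edgeSet.ncard := by
  obtain ⟨p, hp, -⟩ := hc.exists_path_of_dist u v
  obtain ⟨x, hx, q, hq, hmeet⟩ := hc.exists_path_meeting_support_at p w
  have hlen := hp.isTrail.length_add_length_le_ncard hq.isTrail
    (p.edges_disjoint_of_support_inter q hmeet) hfin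
  have := p.dist_add_dist_le_length hx
  have := dist_le p
  have := dist_le q
  have := hc.dist_triangle (u := u) (v := x) (w := w)
  have := hc.dist_triangle (u := v) (v := x) (w := w)
  rw [G.dist_comm (u := v) (v := x), G.dist_comm (u := x) (v := w)] at *
  omega

theorem Subgraph.Connected.dist_add_dist_add_dist_le_two_mul_ncard {H : G.Subgraph}
    (hH : H.Connected) (hfin : H.edgeSet.Finite) {u v w : V} (hu : u ∈ H.verts)
    (hv : v ∈ H.verts) (hw : w ∈ H.verts) :
    G.dist u v + G.dist u w + G.dist v w ≤ 2 * H.edgeSet.ncard := by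
  have hinj : Function.Injective (Sym2.map ((↑) : H.verts → V)) :=
    Sym2.map.injective Subtype.val_injective
  have hncard : H.coe.edgeSet.ncard = H.edgeSet.ncard := by
    rw [← H.image_coe_edgeSet_coe, Set.ncard_image_of_injective _ hinj]
  have hfin' : H.coe.edgeSet.Finite :=
    Set.Finite.of_finite_image (H.image_coe_edgeSet_coe ▸ hfin) hinj.injOn
  have hdist {a b : V} (ha : a ∈ H.verts) (hb : b ∈ H.verts) :
      G.dist a b ≤ H.coe.dist ⟨a, ha⟩ ⟨b, hb⟩ :=
    (hH.coe.preconnected ⟨a, ha⟩ ⟨b, hb⟩).dist_map_le H.hom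
  have := hdist hu hv
  have := hdist hu hw
  have := hdist hv hw
  have := hH.coe.dist_add_dist_add_dist_le_two_mul_ncard hfin' ⟨u, hu⟩ ⟨v, hv⟩ ⟨w, hw⟩
  omega

end SimpleGraph

section Steiner

variable {V : Type*} {G : SimpleGraph V}

theorem steinerDist_le {S : Set V} {H : G.Subgraph} (hH : H.Connected) (hS : S ⊆ H.verts) :
    steinerDist G S ≤ H.edgeSet.ncard :=
  Nat.sInf_le ⟨H, hH, hS, rfl⟩

theorem SimpleGraph.Connected.exists_subgraph_ncard_eq_steinerDist (hc : G.Connected)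
    (S : Set V) : ∃ H : G.Subgraph, H.Connected ∧ S ⊆ H.verts ∧
      H.edgeSet.ncard = steinerDist G S := by
  have hne : ∃ n, ∃ H : G.Subgraph, H.Connected ∧ S ⊆ H.verts ∧ H.edgeSet.ncard = n :=
    ⟨_, toSubgraph G le_rfl, hc.toSubgraph le_rfl, Set.subset_univ S, rfl⟩
  exact Nat.sInf_mem hne

theorem SimpleGraph.Connected.steinerDist_le_dist_add_dist_add_dist_s4 (hc : G.Connected)
    (z u v w : V) : steinerDist G {u, v, w} ≤ G.dist z u + G.dist z v + G.dist z w := by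
  obtain ⟨pu, -, hpu⟩ := hc.exists_path_of_dist z u
  obtain ⟨pv, -, hpv⟩ := hc.exists_path_of_dist z v
  obtain ⟨pw, -, hpw⟩ := hc.exists_path_of_dist z w
  have hconn : (pu.toSubgraph ⊔ pv.toSubgraph ⊔ pw.toSubgraph).Connected :=
    Subgraph.connected_sup
      (Subgraph.connected_sup pu.toSubgraph_connected.preconnected
        pv.toSubgraph_connected.preconnected
        ⟨z, pu.start_mem_verts_toSubgraph, pv.start_mem_verts_toSubgraph⟩).preconnected
      pw.toSubgraph_connected.preconnected
      ⟨z, Or.inl pu.start_mem_verts_toSubgraph, pw.start_mem_verts_toSubgraph⟩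
  have hverts :
      ({u, v, w} : Set V) ⊆ (pu.toSubgraph ⊔ pv.toSubgraph ⊔ pw.toSubgraph).verts := by
    rintro y (rfl | rfl | rfl)
    · exact Or.inl (Or.inl pu.end_mem_verts_toSubgraph)
    · exact Or.inl (Or.inr pv.end_mem_verts_toSubgraph)
    · exact Or.inr pw.end_mem_verts_toSubgraph
  refine (steinerDist_le hconn hverts).trans ?_
  simp only [Subgraph.edgeSet_sup]
  grw [Set.ncard_union_le, Set.ncard_union_le, pu.ncard_edgeSet_toSubgraph_le,
    pv.ncard_edgeSet_toSubgraph_le, pw.ncard_edgeSet_toSubgraph_le, hpu, hpv, hpw]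

theorem SimpleGraph.Connected.dist_add_dist_add_dist_le_two_mul_steinerDist [Finite V]
    (hc : G.Connected) (u v w : V) :
    G.dist u v + G.dist u w + G.dist v w ≤ 2 * steinerDist G {u, v, w} := by
  obtain ⟨H, hH, hverts, hcard⟩ := hc.exists_subgraph_ncard_eq_steinerDist {u, v, w}
  rw [← hcard]
  exact hH.dist_add_dist_add_dist_le_two_mul_ncard (Set.toFinite _) (hverts (by simp))
    (hverts (by simp)) (hverts (by simp))

theorem IsMedian.two_mul_dist_add_dist_add_dist {u v w z : V} (h : IsMedian G u v w z) :
    2 * (G.dist z u + G.dist z v + G.dist z w) = G.dist u v + G.dist u w + G.dist v w := by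
  obtain ⟨huv, huw, hvw⟩ := h
  rw [G.dist_comm (u := u), G.dist_comm (u := v)] at *
  omega

theorem IsModular.two_mul_steinerDist [Finite V] (hG : IsModular G) (u v w : V) :
    2 * steinerDist G {u, v, w} = G.dist u v + G.dist u w + G.dist v w := by
  obtain ⟨hc, hmedian⟩ := hG
  obtain ⟨z, hz⟩ := hmedian u v w
  have := hc.steinerDist_le_dist_add_dist_add_dist_s4 z u v w
  have := hc.dist_add_dist_add_dist_le_two_mul_steinerDist u v w
  have := hz.two_mul_dist_add_dist_add_dist
  omega

end Steiner

section OrderedTriples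

variable {V : Type*} [Fintype V] [DecidableEq V]

theorem sum_O3_fst_snd {R : Type*} [CommRing R] (F : V → V → R) :
    ∑ t ∈ O3 V, F t.1 t.2.1 =
      ((Fintype.card V : R) - 2) * ∑ p ∈ univ.offDiag, F p.1 p.2 := by
  have hpair (u v : V) (huv : u ≠ v) :
      ∑ w ∈ univ.filter (fun w => u ≠ w ∧ v ≠ w), F u v =
        ((Fintype.card V : R) - 2) * F u v := by
    have hfilter : univ.filter (fun w => u ≠ w ∧ v ≠ w) = (univ.erase u).erase v := by
      ext w; simp [eq_comm, and_comm]
    have hcard : (#((univ.erase u).erase v) : R) = Fintype.card V - 2 := by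
      rw [eq_sub_iff_add_eq, ← card_univ, ← card_erase_add_one (mem_univ u),
        ← card_erase_add_one (mem_erase.2 ⟨huv.symm, mem_univ v⟩)]
      push_cast
      ring
    rw [sum_const, hfilter, nsmul_eq_mul, hcard]
  have hoffDiag : (univ.offDiag : Finset (V × V)) = univ.filter fun p => p.1 ≠ p.2 := by
    ext; simp
  simp only [O3, hoffDiag, sum_filter, Fintype.sum_prod_type, mul_sum]
  refine sum_congr rfl fun u _ => sum_congr rfl fun v _ => ?_
  by_cases huv : u = v
  · simp [huv]
  · simp only [huv, Ne, not_false_eq_true, true_and, if_true, ← hpair u v huv, sum_filter]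

theorem filter_O3_eq_perms {u v w : V} (huv : u ≠ v) (huw : u ≠ w) (hvw : v ≠ w) :
    (O3 V).filter (fun t => ({t.1, t.2.1, t.2.2} : Finset V) = {u, v, w}) =
      {(u, v, w), (u, w, v), (v, u, w), (v, w, u), (w, u, v), (w, v, u)} := by
  ext ⟨a, b, c⟩
  simp only [O3, mem_filter, mem_univ, true_and, mem_insert, mem_singleton, Prod.mk.injEq]
  constructor
  · rintro ⟨⟨hab, hac, hbc⟩, hS⟩
    have hmem : ∀ x ∈ ({a, b, c} : Finset V), x = u ∨ x = v ∨ x = w := by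
      simp [hS]
    obtain ha | ha | ha := hmem a (by simp) <;> obtain hb | hb | hb := hmem b (by simp) <;>
      obtain hc | hc | hc := hmem c (by simp) <;> subst ha hb hc <;> simp_all
  · rintro (⟨rfl, rfl, rfl⟩ | ⟨rfl, rfl, rfl⟩ | ⟨rfl, rfl, rfl⟩ | ⟨rfl, rfl, rfl⟩ |
        ⟨rfl, rfl, rfl⟩ | ⟨rfl, rfl, rfl⟩) <;>
      refine ⟨by simp_all [eq_comm], ?_⟩ <;> ext <;> simp <;> tauto

theorem sum_O3_eq_sum_powersetCard_three {M : Type*} [AddCommMonoid M] (g : V × V × V → M)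
    (h : Finset V → M) (hgh : ∀ u v w, u ≠ v → u ≠ w → v ≠ w →
      g (u, v, w) + g (u, w, v) + g (v, u, w) + g (v, w, u) + g (w, u, v) + g (w, v, u) =
        h {u, v, w}) :
    ∑ t ∈ O3 V, g t = ∑ S ∈ powersetCard 3 univ, h S := by
  have hmaps : ∀ t ∈ O3 V, ({t.1, t.2.1, t.2.2} : Finset V) ∈ powersetCard 3 univ := by
    intro t ht
    simp only [O3, mem_filter] at ht
    obtain ⟨-, h12, h13, h23⟩ := ht
    exact mem_powersetCard_univ.2 (card_eq_three.2 ⟨_, _, _, h12, h13, h23, rfl⟩)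
  rw [← sum_fiberwise_of_maps_to hmaps]
  refine sum_congr rfl fun S hS => ?_
  obtain ⟨u, v, w, huv, huw, hvw, rfl⟩ := card_eq_three.1 (mem_powersetCard_univ.1 hS)
  rw [filter_O3_eq_perms huv huw hvw, ← hgh u v w huv huw hvw]
  simp [sum_insert, huv, huw, hvw, huv.symm, huw.symm, hvw.symm, add_assoc]

end OrderedTriples

theorem steiner_three_hyper_wiener_modular_general
    {V : Type*} [Fintype V] [DecidableEq V] (G : SimpleGraph V)
    (hG : IsModular G) :
    SWW 3 G = ((Fintype.card V : ℝ) - 2) / 4 * wiener G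
      + ((Fintype.card V : ℝ) - 2) / 8 * WWbar G + 1 / 8 * WWhat G := by
  let d (x y : V) : ℝ := G.dist x y
  have hsymm (x y : V) : d x y = d y x := by simp only [d, G.dist_comm]
  let g (t : V × V × V) : ℝ :=
    d t.1 t.2.1 / 4 + d t.1 t.2.1 ^ 2 / 8 + d t.1 t.2.1 * d t.1 t.2.2 / 4
  have htriple (u v w : V) (_ : u ≠ v) (_ : u ≠ w) (_ : v ≠ w) :
      g (u, v, w) + g (u, w, v) + g (v, u, w) + g (v, w, u) + g (w, u, v) + g (w, v, u) =
        (steinerDist G ↑({u, v, w} : Finset V) : ℝ)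
          + (steinerDist G ↑({u, v, w} : Finset V)) ^ 2 := by
    have hs : (steinerDist G {u, v, w} : ℝ) = (d u v + d u w + d v w) / 2 := by
      have := congr_arg (Nat.cast (R := ℝ)) (hG.two_mul_steinerDist u v w)
      push_cast at this
      linarith
    simp only [g, coe_insert, coe_singleton, hs, hsymm v u, hsymm w u, hsymm w v]
    ring
  rw [SWW, ← mul_add, ← sum_add_distrib, ← sum_O3_eq_sum_powersetCard_three g _ htriple,
    sum_add_distrib, sum_add_distrib, ← sum_div, ← sum_div, ← sum_div,
    sum_O3_fst_snd (fun x y => d x y), sum_O3_fst_snd (fun x y => d x y ^ 2),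
    wiener, WWbar, WWhat]
  ring

/-- For a modular graph `G` with at least three vertices,
`SWW₃(G) = ((|V|-2)/4)·W(G) + ((|V|-2)/8)·\overline{WW}(G) + (1/8)·\widehat{WW}(G)`. -/
theorem steiner_three_hyper_wiener_modular
    {V : Type*} [Fintype V] [DecidableEq V] (G : SimpleGraph V)
    (hG : IsModular G) (hV : 3 ≤ Fintype.card V) :
    SWW 3 G = ((Fintype.card V : ℝ) - 2) / 4 * wiener G
      + ((Fintype.card V : ℝ) - 2) / 8 * WWbar G + 1 / 8 * WWhat G :=
  steiner_three_hyper_wiener_modular_general G hG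
end

section
/- Let G be a partial cube with Θ-classes E_1, …, E_d. Then \overline{WW}(G) = Σ_{i=1}^{d} n_i^0·n_i^1 + 2·Σ_{i=1}^{d−1} Σ_{j=i+1}^{d} ( n_{ij}^{00}·n_{ij}^{11} + n_{ij}^{01}·n_{ij}^{10} ). -/
open Finset SimpleGraph Polynomial

namespace WWbarAux

lemma hamming_filter {n : ℕ} (x y : Fin n → Bool) :
    hammingDist x y = (Finset.univ.filter fun i => x i ≠ y i).card := rfl

lemma hamming_one_iff {n : ℕ} {x y : Fin n → Bool} :
    hammingDist x y = 1 ↔ ∃! i, x i ≠ y i := by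
  rw [hamming_filter, Finset.card_eq_one]
  constructor
  · rintro ⟨a, ha⟩
    refine ⟨a, ?_, ?_⟩
    · have : a ∈ Finset.univ.filter fun i => x i ≠ y i := by rw [ha]; simp
      simpa using this
    · intro i hi
      have : i ∈ Finset.univ.filter fun i => x i ≠ y i := by simp [hi]
      rw [ha] at this; simpa using this
  · rintro ⟨a, ha, hu⟩
    exact ⟨a, by ext i; simp only [Finset.mem_filter, Finset.mem_univ, true_and,
      Finset.mem_singleton]; exact ⟨fun h => hu i h, fun h => h ▸ ha⟩⟩

lemma hypercube_adj_iff {n : ℕ} {x y : Fin n → Bool} :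
    (hypercubeGraph n).Adj x y ↔ hammingDist x y = 1 := by
  rw [hypercubeGraph, SimpleGraph.fromRel_adj, hamming_one_iff]
  constructor
  · rintro ⟨hne, h | h⟩
    · exact h
    · obtain ⟨i, hi, hu⟩ := h
      exact ⟨i, fun h => hi h.symm, fun j hj => hu j fun h => hj h.symm⟩
  · intro h
    refine ⟨?_, Or.inl h⟩
    rintro rfl
    obtain ⟨i, hi, -⟩ := h
    exact hi rfl

lemma hypercube_reachable_dist {n : ℕ} (x y : Fin n → Bool) :
    (hypercubeGraph n).Reachable x y ∧ (hypercubeGraph n).dist x y ≤ hammingDist x y := by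
  generalize hm : hammingDist x y = m
  induction m generalizing x with
  | zero =>
    obtain rfl : x = y := hammingDist_eq_zero.mp hm
    exact ⟨Reachable.refl x, by simp⟩
  | succ m ih =>
    have hne : x ≠ y := by
      rintro rfl; rw [hammingDist_self] at hm; omega
    have : ∃ i, x i ≠ y i := by
      by_contra h
      push_neg at h
      exact hne (funext h)
    obtain ⟨i, hi⟩ := this
    set x' := Function.update x i (y i) with hx'
    have hadj : (hypercubeGraph n).Adj x x' := by
      rw [hypercube_adj_iff, hamming_one_iff]
      refine ⟨i, by simp [hx', hi], fun j hj => ?_⟩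
      by_contra hji
      simp [hx', Function.update_of_ne hji] at hj
    have hm' : hammingDist x' y = m := by
      have h1 : (Finset.univ.filter fun j => x' j ≠ y j)
          = (Finset.univ.filter fun j => x j ≠ y j).erase i := by
        ext j
        by_cases hji : j = i
        · subst hji; simp [hx']
        · simp [hx', Function.update_of_ne hji, hji]
      rw [hamming_filter, h1, Finset.card_erase_of_mem (by simp [hi]),
        ← hamming_filter, hm]
      omega
    obtain ⟨hr, hd⟩ := ih x' hm'
    refine ⟨hadj.reachable.trans hr, ?_⟩
    obtain ⟨q, hq⟩ := hr.exists_walk_length_eq_dist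
    have h2 : (hypercubeGraph n).dist x y ≤ (SimpleGraph.Walk.cons hadj q).length :=
      SimpleGraph.dist_le _
    simp only [SimpleGraph.Walk.length_cons] at h2
    omega

lemma hamming_le_walk {n : ℕ} {x y : Fin n → Bool} (p : (hypercubeGraph n).Walk x y) :
    hammingDist x y ≤ p.length := by
  induction p with
  | nil => simp
  | cons h q ih =>
    rename_i a b c
    calc hammingDist a c ≤ hammingDist a b + hammingDist b c := hammingDist_triangle _ _ _
      _ ≤ 1 + q.length := by
          have := hypercube_adj_iff.mp h
          omega
      _ = (SimpleGraph.Walk.cons h q).length := by simp [Nat.add_comm]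

lemma hypercube_dist {n : ℕ} (x y : Fin n → Bool) :
    (hypercubeGraph n).dist x y = hammingDist x y := by
  obtain ⟨hr, hle⟩ := hypercube_reachable_dist x y
  refine le_antisymm hle ?_
  obtain ⟨p, hp⟩ := hr.exists_walk_length_eq_dist
  rw [← hp]
  exact hamming_le_walk p

/-- edge `e` flips coordinate `m` under the embedding `f`. -/
def Flips {V : Type*} {n : ℕ} (f : V → Fin n → Bool) (e : Sym2 V) (m : Fin n) : Prop :=
  ∃ u v : V, e = s(u, v) ∧ f u m ≠ f v m

section Setup

variable {V : Type*} {G : SimpleGraph V} {n : ℕ} {f : V → Fin n → Bool}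
variable (hd : ∀ u v : V, G.dist u v = hammingDist (f u) (f v))

include hd

lemma flips_exists_unique {e : Sym2 V} (he : e ∈ G.edgeSet) :
    ∃! m : Fin n, Flips f e m := by
  induction e with
  | _ u v =>
    have hadj : G.Adj u v := he
    have h1 : hammingDist (f u) (f v) = 1 := by
      rw [← hd]; exact SimpleGraph.dist_eq_one_iff_adj.mpr hadj
    rw [hamming_filter, Finset.card_eq_one] at h1
    obtain ⟨a, ha⟩ := h1
    have hfa : f u a ≠ f v a := by
      have : a ∈ Finset.univ.filter fun i => f u i ≠ f v i := by rw [ha]; simp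
      simpa using this
    refine ⟨a, ⟨u, v, rfl, hfa⟩, ?_⟩
    rintro m ⟨u', v', he', hm⟩
    have hm' : f u m ≠ f v m := by
      rw [Sym2.eq_iff] at he'
      rcases he' with ⟨rfl, rfl⟩ | ⟨rfl, rfl⟩
      · exact hm
      · exact fun h => hm h.symm
    have : m ∈ Finset.univ.filter fun i => f u i ≠ f v i := by simp [hm']
    rw [ha] at this; simpa using this

/-- coordinatewise form of the distance. -/
lemma dist_coord (u v : V) :
    G.dist u v = ∑ m : Fin n, (if f u m = f v m then 0 else 1) := by
  rw [hd, hamming_filter, Finset.card_filter]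
  exact Finset.sum_congr rfl fun m _ => by by_cases h : f u m = f v m <;> simp [h]

lemma theta_iff {e g : Sym2 V} (he : e ∈ G.edgeSet) (hg : g ∈ G.edgeSet)
    {a b : Fin n} (hea : Flips f e a) (hgb : Flips f g b) :
    theta G e g ↔ a = b := by
  obtain ⟨u, v, rfl, hfa⟩ := hea
  obtain ⟨x, y, rfl, hfb⟩ := hgb
  have heu : ∀ m, m ≠ a → f u m = f v m := by
    intro m hm
    by_contra hne
    exact hm ((flips_exists_unique hd he).unique ⟨u, v, rfl, hne⟩ ⟨u, v, rfl, hfa⟩)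
  have hgu : ∀ m, m ≠ b → f x m = f y m := by
    intro m hm
    by_contra hne
    exact hm ((flips_exists_unique hd hg).unique ⟨x, y, rfl, hne⟩ ⟨x, y, rfl, hfb⟩)
  constructor
  · rintro ⟨u₁, v₁, u₂, v₂, h1, h2, hne⟩
    by_contra hab
    apply hne
    have key : G.dist u u₂ + G.dist v v₂ = G.dist u v₂ + G.dist v u₂ →
        G.dist u₁ u₂ + G.dist v₁ v₂ = G.dist u₁ v₂ + G.dist v₁ u₂ := by
      rw [Sym2.eq_iff] at h1
      rcases h1 with ⟨rfl, rfl⟩ | ⟨rfl, rfl⟩ <;> intro h <;> omega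
    have key2 : ∀ x₂ y₂ : V, s(x, y) = s(x₂, y₂) →
        (∀ m, f x₂ m = f y₂ m ∨ m = b) ∧ f x₂ b ≠ f y₂ b := by
      intro x₂ y₂ h
      rw [Sym2.eq_iff] at h
      rcases h with ⟨rfl, rfl⟩ | ⟨rfl, rfl⟩
      · exact ⟨fun m => (em (m = b)).symm.imp_left (hgu m), hfb⟩
      · exact ⟨fun m => ((em (m = b)).symm.imp_left (hgu m)).imp_left Eq.symm,
          fun h => hfb h.symm⟩
    obtain ⟨hg2, -⟩ := key2 u₂ v₂ h2
    apply key
    rw [dist_coord hd, dist_coord hd, dist_coord hd, dist_coord hd,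
      ← Finset.sum_add_distrib, ← Finset.sum_add_distrib]
    apply Finset.sum_congr rfl
    intro m _
    rcases hg2 m with h | h
    · rw [h]
    · have hma : m ≠ a := by rintro rfl; exact hab h
      rw [heu m hma]
      exact add_comm _ _
  · rintro rfl
    refine ⟨u, v, x, y, rfl, rfl, ?_⟩
    rw [dist_coord hd, dist_coord hd, dist_coord hd, dist_coord hd,
      ← Finset.sum_add_distrib, ← Finset.sum_add_distrib]
    intro hsum
    rw [← Finset.add_sum_erase _ _ (Finset.mem_univ a),
      ← Finset.add_sum_erase _ _ (Finset.mem_univ a)] at hsum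
    have hS : ∑ m ∈ Finset.univ.erase a,
        ((if f u m = f x m then 0 else 1) + if f v m = f y m then 0 else 1)
        = ∑ m ∈ Finset.univ.erase a,
        ((if f u m = f y m then 0 else 1) + if f v m = f x m then 0 else 1) := by
      apply Finset.sum_congr rfl
      intro m hm
      rw [heu m (Finset.ne_of_mem_erase hm)]
      omega
    rw [hS] at hsum
    have hha : ((if f u a = f x a then (0:ℕ) else 1) + if f v a = f y a then 0 else 1)
        ≠ ((if f u a = f y a then 0 else 1) + if f v a = f x a then 0 else 1) := by
      revert hfa hfb
      cases h1 : f u a <;> cases h2 : f v a <;> cases h3 : f x a <;> cases h4 : f y a <;> simp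
    omega

lemma exists_flip_edge {u v : V} (p : G.Walk u v) (hp : p.length = hammingDist (f u) (f v))
    (m : Fin n) (hm : f u m ≠ f v m) : ∃ e ∈ p.edges, Flips f e m := by
  induction p with
  | nil => exact absurd rfl hm
  | cons h q ih =>
    rename_i a b c
    by_cases hab : f a m = f b m
    · have h1 : hammingDist (f a) (f b) = 1 := by
        rw [← hd]; exact SimpleGraph.dist_eq_one_iff_adj.mpr h
      have h2 : hammingDist (f b) (f c) ≤ q.length := (hd b c) ▸ SimpleGraph.dist_le q
      have h3 : hammingDist (f a) (f c) ≤ hammingDist (f a) (f b) + hammingDist (f b) (f c) :=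
        hammingDist_triangle _ _ _
      simp only [SimpleGraph.Walk.length_cons] at hp
      have hq : q.length = hammingDist (f b) (f c) := by omega
      obtain ⟨e, hee, hef⟩ := ih hq (fun hbc => hm (hab.trans hbc))
      exact ⟨e, by simp [hee], hef⟩
    · exact ⟨s(a, b), by simp, a, b, rfl, hab⟩

end Setup

end WWbarAux

open WWbarAux

/-- Cut method for `\overline{WW}` of a partial cube:
`\overline{WW}(G) = ∑ᵢ n⁰ᵢ·n¹ᵢ + 2·∑_{i<j} (n⁰⁰ᵢⱼ n¹¹ᵢⱼ + n⁰¹ᵢⱼ n¹⁰ᵢⱼ)`. -/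
theorem WWbar_partial_cube
    {V : Type*} [Fintype V] [DecidableEq V] (G : SimpleGraph V)
    (hPC : IsPartialCube G) (d : ℕ) (E : Fin d → Set (Sym2 V)) (U U' : Fin d → Set V)
    (hsetup : IsThetaClassSetup G d E U U') :
    WWbar G = (∑ i : Fin d, ((U i).ncard : ℝ) * ((U' i).ncard : ℝ))
      + 2 * ∑ i : Fin d, ∑ j ∈ Finset.univ.filter (fun j => i < j),
          (((U i ∩ U j).ncard : ℝ) * ((U' i ∩ U' j).ncard : ℝ)
            + ((U i ∩ U' j).ncard : ℝ) * ((U' i ∩ U j).ncard : ℝ)) := by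
  obtain ⟨hconn, n, f, hiso⟩ := hPC
  have hd : ∀ u v : V, G.dist u v = hammingDist (f u) (f v) := fun u v => by
    rw [← hiso u v, hypercube_dist]
  obtain ⟨hcl, hinj, hcov, hcomp⟩ := hsetup
  choose e he hE using hcl
  choose k hk using fun i => (flips_exists_unique hd (he i)).exists
  -- membership in a Θ-class is flipping the corresponding coordinate
  have hmemE : ∀ (i : Fin d) (g : Sym2 V), g ∈ E i ↔ g ∈ G.edgeSet ∧ Flips f g (k i) := by
    intro i g
    rw [hE i]
    constructor
    · rintro ⟨hg, ht⟩
      obtain ⟨m, hm⟩ := (flips_exists_unique hd hg).exists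
      exact ⟨hg, ((theta_iff hd hg (he i) hm (hk i)).mp ht) ▸ hm⟩
    · rintro ⟨hg, hfl⟩
      exact ⟨hg, (theta_iff hd hg (he i) hfl (hk i)).mpr rfl⟩
  have hkinj : Function.Injective k := by
    intro i j hij
    apply hinj
    ext g
    rw [hmemE i g, hmemE j g, hij]
  -- distance counts separating coordinates
  have hdist : ∀ u v : V, G.dist u v
      = ((Finset.univ : Finset (Fin d)).filter fun i => f u (k i) ≠ f v (k i)).card := by
    intro u v
    rw [hd, hamming_filter]
    have himg : (Finset.univ.filter fun m => f u m ≠ f v m)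
        = Finset.image k (Finset.univ.filter fun i => f u (k i) ≠ f v (k i)) := by
      apply Finset.Subset.antisymm
      · intro m hm
        simp only [Finset.mem_filter, Finset.mem_univ, true_and] at hm
        obtain ⟨p, hp⟩ := (hconn.preconnected u v).exists_walk_length_eq_dist
        obtain ⟨g, hgp, hgf⟩ := exists_flip_edge hd p (hp.trans (hd u v)) m hm
        have hgE : g ∈ G.edgeSet := p.edges_subset_edgeSet hgp
        obtain ⟨i, hi⟩ := Set.mem_iUnion.mp (hcov ▸ hgE)
        have hmk : m = k i := (flips_exists_unique hd hgE).unique hgf ((hmemE i g).mp hi).2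
        subst hmk
        simp only [Finset.mem_image, Finset.mem_filter, Finset.mem_univ, true_and]
        exact ⟨i, hm, rfl⟩
      · intro m hm
        simp only [Finset.mem_image, Finset.mem_filter, Finset.mem_univ, true_and] at hm ⊢
        obtain ⟨i, hi, rfl⟩ := hm
        exact hi
    rw [himg, Finset.card_image_of_injective _ hkinj]
  -- the two sides of each cut
  have hsideE : ∀ i : Fin d, ∃ β : Bool,
      U i = {v : V | f v (k i) = β} ∧ U' i = {v : V | f v (k i) ≠ β} := by
    intro i
    set H := G.deleteEdges (E i) with hH
    have hHadj : ∀ a b : V, H.Adj a b → f a (k i) = f b (k i) := by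
      intro a b hab
      rw [hH, SimpleGraph.deleteEdges_adj] at hab
      obtain ⟨hGab, hnmem⟩ := hab
      by_contra hne
      have : s(a, b) ∈ E i := (hmemE i s(a, b)).mpr ⟨hGab, a, b, rfl, hne⟩
      exact hnmem this
    have hHreach : ∀ a b : V, H.Reachable a b → f a (k i) = f b (k i) := by
      intro a b hab
      obtain ⟨w⟩ := hab
      induction w with
      | nil => rfl
      | cons h q ih => exact (hHadj _ _ h).trans ih
    obtain ⟨a, b, heab, hfab⟩ := hk i
    obtain ⟨c, c', hcc', hUc, hU'c', hall⟩ := hcomp i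
    have hmkab : H.connectedComponentMk a ≠ H.connectedComponentMk b := by
      intro h
      exact hfab (hHreach a b (SimpleGraph.ConnectedComponent.eq.mp h))
    have hclaim : ∀ x y : V, f x (k i) ≠ f y (k i) →
        H.connectedComponentMk x = c → H.connectedComponentMk y = c' →
        c.supp = {v : V | f v (k i) = f x (k i)}
          ∧ c'.supp = {v : V | f v (k i) ≠ f x (k i)} := by
      intro x y hxy hxc hyc'
      constructor
      · ext v
        simp only [SimpleGraph.ConnectedComponent.mem_supp_iff, Set.mem_setOf_eq]
        constructor
        · intro hv
          exact hHreach v x (SimpleGraph.ConnectedComponent.eq.mp (hv.trans hxc.symm))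
        · intro hv
          rcases hall (H.connectedComponentMk v) with h | h
          · exact h
          · exfalso
            have := hHreach v y (SimpleGraph.ConnectedComponent.eq.mp (h.trans hyc'.symm))
            rw [hv] at this
            exact hxy this
      · ext v
        simp only [SimpleGraph.ConnectedComponent.mem_supp_iff, Set.mem_setOf_eq]
        constructor
        · intro hv hvx
          have := hHreach v y (SimpleGraph.ConnectedComponent.eq.mp (hv.trans hyc'.symm))
          exact hxy (hvx.symm.trans this)
        · intro hv
          rcases hall (H.connectedComponentMk v) with h | h
          · exact absurd (hHreach v x (SimpleGraph.ConnectedComponent.eq.mp (h.trans hxc.symm))) hv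
          · exact h
    rcases hall (H.connectedComponentMk a) with ha | ha
    · have hb : H.connectedComponentMk b = c' := by
        rcases hall (H.connectedComponentMk b) with hb | hb
        · exact absurd (ha.trans hb.symm) hmkab
        · exact hb
      obtain ⟨h1, h2⟩ := hclaim a b hfab ha hb
      exact ⟨f a (k i), by rw [hUc, h1], by rw [hU'c', h2]⟩
    · have hb : H.connectedComponentMk b = c := by
        rcases hall (H.connectedComponentMk b) with hb | hb
        · exact hb
        · exact absurd (ha.trans hb.symm).symm hmkab.symm
      obtain ⟨h1, h2⟩ := hclaim b a (Ne.symm hfab) hb ha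
      exact ⟨f b (k i), by rw [hUc, h1], by rw [hU'c', h2]⟩
  choose β hUβ hU'β using hsideE
  -- finite side sets
  set A : Fin d → Finset V := fun i => Finset.univ.filter fun v => f v (k i) = β i with hA
  set A' : Fin d → Finset V := fun i => Finset.univ.filter fun v => f v (k i) ≠ β i with hA'
  have hUA : ∀ i, U i = ↑(A i) := by
    intro i; rw [hUβ i]; ext v; simp [hA]
  have hU'A : ∀ i, U' i = ↑(A' i) := by
    intro i; rw [hU'β i]; ext v; simp [hA']
  -- real-valued indicators
  set S : Fin d → V → ℝ := fun i u => if f u (k i) = β i then 1 else 0 with hS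
  set T : Fin d → V → ℝ := fun i u => if f u (k i) ≠ β i then 1 else 0 with hT
  have hbool : ∀ a b c : Bool, a ≠ c → b ≠ c → a = b := by decide
  have hchi : ∀ (i : Fin d) (u v : V),
      (if f u (k i) ≠ f v (k i) then (1:ℝ) else 0) = S i u * T i v + T i u * S i v := by
    intro i u v
    by_cases h1 : f u (k i) = β i <;> by_cases h2 : f v (k i) = β i
    · simp [hS, hT, h1, h2]
    · have hne : f u (k i) ≠ f v (k i) := by rw [h1]; exact fun h => h2 h.symm
      have h2' : ¬ β i = f v (k i) := fun h => h2 h.symm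
      simp [hS, hT, h1, h2, h2', hne]
    · have hne : f u (k i) ≠ f v (k i) := fun h => h1 (h.trans h2)
      have h1' : ¬ β i = f u (k i) := fun h => h1 h.symm
      simp [hS, hT, h1, h2, h1', hne]
    · have heq : f u (k i) = f v (k i) := hbool _ _ _ h1 h2
      simp [hS, hT, h1, h2, heq]
  have hDsum : ∀ u v : V, (G.dist u v : ℝ) = ∑ i : Fin d, (S i u * T i v + T i u * S i v) := by
    intro u v
    rw [hdist u v, Finset.card_filter, Nat.cast_sum]
    apply Finset.sum_congr rfl
    intro i _
    rw [← hchi i u v]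
    split_ifs <;> simp
  -- indicator sums are cardinalities
  have sum_ind : ∀ (p q : V → Prop) (_ : DecidablePred p) (_ : DecidablePred q),
      ∑ u : V, ((if p u then (1:ℝ) else 0) * (if q u then 1 else 0))
        = ((Finset.univ.filter p ∩ Finset.univ.filter q).card : ℝ) := by
    intro p q hp hq
    rw [← Finset.filter_and, Finset.card_filter, Nat.cast_sum]
    apply Finset.sum_congr rfl
    intro u _
    by_cases h1 : p u <;> by_cases h2 : q u <;> simp [h1, h2]
  have hM : ∀ i j : Fin d,
      (∑ u : V, ∑ v : V, (S i u * T i v + T i u * S i v) * (S j u * T j v + T j u * S j v))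
      = 2 * (((A i ∩ A j).card : ℝ) * ((A' i ∩ A' j).card : ℝ)
          + ((A i ∩ A' j).card : ℝ) * ((A' i ∩ A j).card : ℝ)) := by
    intro i j
    have expand : ∀ u v : V,
        (S i u * T i v + T i u * S i v) * (S j u * T j v + T j u * S j v)
        = (S i u * S j u) * (T i v * T j v) + (S i u * T j u) * (T i v * S j v)
          + (T i u * S j u) * (S i v * T j v) + (T i u * T j u) * (S i v * S j v) :=
      fun u v => by ring
    simp only [expand, Finset.sum_add_distrib]
    rw [← Finset.sum_mul_sum, ← Finset.sum_mul_sum, ← Finset.sum_mul_sum, ← Finset.sum_mul_sum]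
    have e1 : ∑ u : V, S i u * S j u
        = ((Finset.univ.filter (fun v => f v (k i) = β i)
            ∩ Finset.univ.filter (fun v => f v (k j) = β j)).card : ℝ) := by
      rw [← sum_ind _ _ (fun _ => inferInstance) (fun _ => inferInstance)]
    have e2 : ∑ v : V, T i v * T j v
        = ((Finset.univ.filter (fun v => f v (k i) ≠ β i)
            ∩ Finset.univ.filter (fun v => f v (k j) ≠ β j)).card : ℝ) := by
      rw [← sum_ind _ _ (fun _ => inferInstance) (fun _ => inferInstance)]
    have e3 : ∑ u : V, S i u * T j u
        = ((Finset.univ.filter (fun v => f v (k i) = β i)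
            ∩ Finset.univ.filter (fun v => f v (k j) ≠ β j)).card : ℝ) := by
      rw [← sum_ind _ _ (fun _ => inferInstance) (fun _ => inferInstance)]
    have e4 : ∑ v : V, T i v * S j v
        = ((Finset.univ.filter (fun v => f v (k i) ≠ β i)
            ∩ Finset.univ.filter (fun v => f v (k j) = β j)).card : ℝ) := by
      rw [← sum_ind _ _ (fun _ => inferInstance) (fun _ => inferInstance)]
    rw [e1, e2, e3, e4]
    simp only [hA, hA']
    ring
  -- symmetric double-sum splitting
  have trich : ∀ (F : Fin d → Fin d → ℝ), (∀ i j, F i j = F j i) →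
      ∑ i : Fin d, ∑ j : Fin d, F i j
      = (∑ i : Fin d, F i i)
        + 2 * ∑ i : Fin d, ∑ j ∈ Finset.univ.filter (fun j => i < j), F i j := by
    intro F hsym
    have h1 : ∀ i j : Fin d, F i j
        = (if i = j then F i j else 0) + (if i < j then F i j else 0)
          + (if j < i then F i j else 0) := by
      intro i j
      rcases lt_trichotomy i j with h | h | h
      · simp [h, h.ne, h.asymm]
      · simp [h, lt_irrefl]
      · simp [h, h.ne', h.asymm]
    calc ∑ i : Fin d, ∑ j : Fin d, F i j
        = ∑ i : Fin d, ∑ j : Fin d, ((if i = j then F i j else 0)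
            + (if i < j then F i j else 0) + (if j < i then F i j else 0)) := by
          exact Finset.sum_congr rfl fun i _ => Finset.sum_congr rfl fun j _ => h1 i j
      _ = (∑ i : Fin d, ∑ j : Fin d, if i = j then F i j else 0)
          + (∑ i : Fin d, ∑ j : Fin d, if i < j then F i j else 0)
          + (∑ i : Fin d, ∑ j : Fin d, if j < i then F i j else 0) := by
          simp only [Finset.sum_add_distrib]
      _ = (∑ i : Fin d, F i i)
          + (∑ i : Fin d, ∑ j ∈ Finset.univ.filter (fun j => i < j), F i j)
          + (∑ i : Fin d, ∑ j ∈ Finset.univ.filter (fun j => i < j), F i j) := by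
          congr 1
          · congr 1
            · apply Finset.sum_congr rfl
              intro i _
              simp [Finset.sum_ite_eq]
            · apply Finset.sum_congr rfl
              intro i _
              rw [Finset.sum_filter]
          · rw [Finset.sum_comm]
            apply Finset.sum_congr rfl
            intro j _
            rw [Finset.sum_filter]
            exact Finset.sum_congr rfl fun i _ => by rw [hsym]
      _ = (∑ i : Fin d, F i i)
          + 2 * ∑ i : Fin d, ∑ j ∈ Finset.univ.filter (fun j => i < j), F i j := by ring
  -- define the per-pair count and its symmetry
  set NM : Fin d → Fin d → ℝ := fun i j =>
    2 * (((A i ∩ A j).card : ℝ) * ((A' i ∩ A' j).card : ℝ)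
      + ((A i ∩ A' j).card : ℝ) * ((A' i ∩ A j).card : ℝ)) with hNM
  have hNMsym : ∀ i j, NM i j = NM j i := by
    intro i j
    simp only [hNM]
    rw [Finset.inter_comm (A i) (A j), Finset.inter_comm (A' i) (A' j),
      Finset.inter_comm (A i) (A' j), Finset.inter_comm (A' i) (A j)]
    ring
  have hdisj : ∀ i, (A i ∩ A' i) = (∅ : Finset V) := by
    intro i
    ext v
    simp [hA, hA']
  have hdisj' : ∀ i, (A' i ∩ A i) = (∅ : Finset V) := by
    intro i
    rw [Finset.inter_comm]
    exact hdisj i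
  -- compute the sum of squared distances
  have hmain : ∑ p ∈ Finset.univ.offDiag, (G.dist p.1 p.2 : ℝ) ^ 2
      = ∑ i : Fin d, ∑ j : Fin d, NM i j := by
    have hoff : ∑ p ∈ Finset.univ.offDiag, (G.dist p.1 p.2 : ℝ) ^ 2
        = ∑ p ∈ Finset.univ ×ˢ Finset.univ, (G.dist p.1 p.2 : ℝ) ^ 2 := by
      apply Finset.sum_subset
      · intro p hp
        simp [Finset.mem_product]
      · intro p _ hnp
        have : p.1 = p.2 := by
          by_contra h
          exact hnp (Finset.mem_offDiag.mpr ⟨Finset.mem_univ _, Finset.mem_univ _, h⟩)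
        rw [this]
        simp [SimpleGraph.dist_self]
    rw [hoff, Finset.sum_product]
    have hsq : ∀ u v : V, (G.dist u v : ℝ) ^ 2
        = ∑ i : Fin d, ∑ j : Fin d,
            (S i u * T i v + T i u * S i v) * (S j u * T j v + T j u * S j v) := by
      intro u v
      rw [sq, hDsum u v, Finset.sum_mul_sum]
    calc ∑ u : V, ∑ v : V, (G.dist u v : ℝ) ^ 2
        = ∑ u : V, ∑ v : V, ∑ i : Fin d, ∑ j : Fin d,
            (S i u * T i v + T i u * S i v) * (S j u * T j v + T j u * S j v) :=
          Finset.sum_congr rfl fun u _ => Finset.sum_congr rfl fun v _ => hsq u v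
      _ = ∑ i : Fin d, ∑ j : Fin d, ∑ u : V, ∑ v : V,
            (S i u * T i v + T i u * S i v) * (S j u * T j v + T j u * S j v) := by
          have hswap : ∀ u : V, (∑ v : V, ∑ i : Fin d, ∑ j : Fin d,
              (S i u * T i v + T i u * S i v) * (S j u * T j v + T j u * S j v))
              = ∑ i : Fin d, ∑ j : Fin d, ∑ v : V,
              (S i u * T i v + T i u * S i v) * (S j u * T j v + T j u * S j v) := by
            intro u
            rw [Finset.sum_comm]
            exact Finset.sum_congr rfl fun i _ => Finset.sum_comm
          rw [Finset.sum_congr rfl fun u _ => hswap u, Finset.sum_comm]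
          exact Finset.sum_congr rfl fun i _ => Finset.sum_comm
      _ = ∑ i : Fin d, ∑ j : Fin d, NM i j :=
          Finset.sum_congr rfl fun i _ => Finset.sum_congr rfl fun j _ => hM i j
  -- put everything together
  have hncard : ∀ i, ((U i).ncard : ℝ) = ((A i).card : ℝ) := by
    intro i
    rw [hUA i, Set.ncard_coe_finset]
  have hncard' : ∀ i, ((U' i).ncard : ℝ) = ((A' i).card : ℝ) := by
    intro i
    rw [hU'A i, Set.ncard_coe_finset]
  have hn2 : ∀ (B C : Fin d → Set V) (B' C' : Fin d → Finset V),
      (∀ i, B i = ↑(B' i)) → (∀ i, C i = ↑(C' i)) →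
      ∀ i j, ((B i ∩ C j).ncard : ℝ) = ((B' i ∩ C' j).card : ℝ) := by
    intro B C B' C' hB hC i j
    rw [hB i, hC j, ← Finset.coe_inter, Set.ncard_coe_finset]
  have key : ∀ i j : Fin d, NM i j
      = 2 * (((U i ∩ U j).ncard : ℝ) * ((U' i ∩ U' j).ncard : ℝ)
        + ((U i ∩ U' j).ncard : ℝ) * ((U' i ∩ U j).ncard : ℝ)) := by
    intro i j
    rw [hn2 U U A A hUA hUA i j, hn2 U' U' A' A' hU'A hU'A i j,
      hn2 U U' A A' hUA hU'A i j, hn2 U' U A' A hU'A hUA i j]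
  have key2 : ∀ i : Fin d, NM i i = 2 * (((U i).ncard : ℝ) * ((U' i).ncard : ℝ)) := by
    intro i
    rw [hncard i, hncard' i]
    simp only [hNM]
    rw [Finset.inter_self, Finset.inter_self, hdisj i, hdisj' i]
    simp
  rw [WWbar, hmain, trich NM hNMsym,
    Finset.sum_congr rfl fun i (_ : i ∈ Finset.univ) => key2 i,
    Finset.sum_congr rfl fun i (_ : i ∈ Finset.univ) =>
      Finset.sum_congr rfl fun j (_ : j ∈ Finset.univ.filter (fun j => i < j)) => key i j]
  simp only [← Finset.mul_sum]
  ring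
end

section
/- Let G be a partial cube with at least three vertices and Θ-classes E_1, …, E_d. Then \widehat{WW}(G) = Σ_{i=1}^{d} ( n_i^0·n_i^1·(n_i^1−1) + n_i^1·n_i^0·(n_i^0−1) ) + 2·Σ_{i=1}^{d−1} Σ_{j=i+1}^{d} ( 3 n_{ij}^{00} n_{ij}^{01} n_{ij}^{10} + 3 n_{ij}^{00} n_{ij}^{01} n_{ij}^{11} + 3 n_{ij}^{00} n_{ij}^{10} n_{ij}^{11} + 3 n_{ij}^{01} n_{ij}^{10} n_{ij}^{11} + n_{ij}^{00} n_{ij}^{11}(n_{ij}^{11}−1) + n_{ij}^{01} n_{ij}^{10}(n_{ij}^{10}−1) + n_{ij}^{10} n_{ij}^{01}(n_{ij}^{01}−1) + n_{ij}^{11} n_{ij}^{00}(n_{ij}^{00}−1) ). -/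
open Finset SimpleGraph Polynomial

lemma ham_card {n : ℕ} (x y : Fin n → Bool) :
    hammingDist x y = (Finset.univ.filter fun i => x i ≠ y i).card := rfl

lemma hyper_adj {n : ℕ} {x y : Fin n → Bool} :
    (hypercubeGraph n).Adj x y ↔ hammingDist x y = 1 := by
  have key : ∀ (a b : Fin n → Bool), (∃! i, a i ≠ b i) → hammingDist a b = 1 := by
    intro a b ⟨i, hi, hu⟩
    rw [ham_card, Finset.card_eq_one]
    refine ⟨i, ?_⟩
    ext j
    simp only [mem_filter, mem_univ, true_and, mem_singleton]
    exact ⟨fun hj => hu j hj, fun hj => hj ▸ hi⟩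
  constructor
  · rintro ⟨hne, h | h⟩
    · exact key x y h
    · have := key y x h
      rwa [hammingDist_comm] at this
  · intro h
    rw [ham_card, Finset.card_eq_one] at h
    obtain ⟨i, hi⟩ := h
    have hmem : ∀ j, x j ≠ y j ↔ j = i := by
      intro j
      constructor
      · intro hj
        have : j ∈ ({i} : Finset (Fin n)) := hi ▸ (by simp [hj])
        simpa using this
      · intro hji
        subst hji
        have : j ∈ Finset.univ.filter fun j' => x j' ≠ y j' := hi ▸ (by simp)
        simpa using this
    have hxi : x i ≠ y i := (hmem i).2 rfl
    exact ⟨fun he => hxi (congrFun he i), Or.inl ⟨i, hxi, fun j hj => (hmem j).1 hj⟩⟩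

lemma ham_le_walk {n : ℕ} : ∀ {x y : Fin n → Bool} (w : (hypercubeGraph n).Walk x y),
    hammingDist x y ≤ w.length := by
  intro x y w
  induction w with
  | nil => simp
  | @cons a b c h w ih =>
    have h1 : hammingDist a b = 1 := hyper_adj.1 h
    calc hammingDist a c ≤ hammingDist a b + hammingDist b c := hammingDist_triangle _ _ _
    _ ≤ 1 + w.length := by omega
    _ = _ := by simp [Nat.add_comm]

lemma exists_walk_ham {n : ℕ} : ∀ (m : ℕ) (x y : Fin n → Bool), hammingDist x y = m →
    ∃ w : (hypercubeGraph n).Walk x y, w.length = m := by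
  intro m
  induction m with
  | zero =>
    intro x y h
    obtain rfl : x = y := hammingDist_eq_zero.1 h
    exact ⟨.nil, rfl⟩
  | succ m ih =>
    intro x y h
    have hne : (Finset.univ.filter fun i => x i ≠ y i).Nonempty := by
      rw [← Finset.card_pos, ← ham_card, h]; omega
    obtain ⟨i, hi⟩ := hne
    simp only [mem_filter, mem_univ, true_and] at hi
    set x' := Function.update x i (y i) with hx'
    have hxx' : (hypercubeGraph n).Adj x x' := by
      refine ⟨fun he => hi (by simpa [hx', Function.update_self] using congrFun he i),
        Or.inl ⟨i, by simpa [hx', Function.update_self] using hi, fun j hj => by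
          by_contra hji
          exact hj (by simp [hx', Function.update_of_ne hji])⟩⟩
    have hham : hammingDist x' y = m := by
      have he : (Finset.univ.filter fun j => x' j ≠ y j)
          = (Finset.univ.filter fun j => x j ≠ y j).erase i := by
        ext j
        simp only [mem_filter, mem_univ, true_and, mem_erase]
        rcases eq_or_ne j i with rfl | hji
        · simp [hx', Function.update_self]
        · simp [hx', Function.update_of_ne hji, hji]
      have hc := ham_card x' y
      rw [he, Finset.card_erase_of_mem (by simp [hi]), ← ham_card, h] at hc
      simpa using hc
    obtain ⟨w, hw⟩ := ih x' y hham
    exact ⟨.cons hxx' w, by simp [hw]⟩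

lemma hyper_dist {n : ℕ} (x y : Fin n → Bool) :
    (hypercubeGraph n).dist x y = hammingDist x y := by
  obtain ⟨w, hw⟩ := exists_walk_ham (hammingDist x y) x y rfl
  refine le_antisymm (hw ▸ SimpleGraph.dist_le w) ?_
  have hr : (hypercubeGraph n).Reachable x y := ⟨w⟩
  obtain ⟨w', hw'⟩ := hr.exists_walk_length_eq_dist
  exact hw' ▸ ham_le_walk w'




def brkt (a b c e : ℝ) : ℝ :=
  3*a*b*c + 3*a*b*e + 3*a*c*e + 3*b*c*e + a*e*(e-1) + b*c*(c-1) + c*b*(b-1) + e*a*(a-1)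

def gpoly (a b c e : ℝ) : ℝ :=
  a*((c+e)*(b+e)) + b*((c+e)*(a+c)) + c*((a+b)*(b+e)) + e*((a+b)*(a+c))
    - (a*e + b*c + c*b + e*a)

noncomputable def chi {V : Type*} (p : V → ℝ) (u v : V) : ℝ :=
  p u * (1 - p v) + (1 - p u) * p v

lemma tri_split {d : ℕ} (g : Fin d → Fin d → ℝ) :
    ∑ i, ∑ j, g i j
      = ∑ i, g i i + ∑ i, ∑ j ∈ Finset.univ.filter (fun j => i < j), (g i j + g j i) := by
  have h1 : ∀ i j : Fin d, g i j
      = (if i = j then g i j else 0) + (if i < j then g i j else 0)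
        + (if j < i then g i j else 0) := by
    intro i j
    rcases lt_trichotomy i j with h | h | h
    · simp [h, ne_of_lt h, asymm h]
    · simp [h, lt_irrefl]
    · simp [h, (ne_of_lt h).symm, asymm h]
  calc ∑ i, ∑ j, g i j
      = ∑ i, ∑ j, ((if i = j then g i j else 0) + (if i < j then g i j else 0)
          + (if j < i then g i j else 0)) := by
        refine Finset.sum_congr rfl fun i _ => Finset.sum_congr rfl fun j _ => h1 i j
    _ = ∑ i, ((∑ j, if i = j then g i j else 0) + (∑ j, if i < j then g i j else 0)
          + (∑ j, if j < i then g i j else 0)) := by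
        refine Finset.sum_congr rfl fun i _ => ?_
        rw [Finset.sum_add_distrib, Finset.sum_add_distrib]
    _ = (∑ i, ∑ j, if i = j then g i j else 0) + (∑ i, ∑ j, if i < j then g i j else 0)
          + (∑ i, ∑ j, if j < i then g i j else 0) := by
        rw [Finset.sum_add_distrib, Finset.sum_add_distrib]
    _ = ∑ i, g i i + ∑ i, ∑ j ∈ Finset.univ.filter (fun j => i < j), (g i j + g j i) := by
        have t1 : (∑ i, ∑ j, if i = j then g i j else 0) = ∑ i : Fin d, g i i := by
          refine Finset.sum_congr rfl fun i _ => ?_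
          rw [Finset.sum_ite_eq]
          simp
        have t2 : (∑ i, ∑ j, if i < j then g i j else 0)
            = ∑ i, ∑ j ∈ Finset.univ.filter (fun j => i < j), g i j := by
          refine Finset.sum_congr rfl fun i _ => ?_
          rw [Finset.sum_filter]
        have t3 : (∑ i, ∑ j, if j < i then g i j else 0)
            = ∑ i, ∑ j ∈ Finset.univ.filter (fun j => i < j), g j i := by
          rw [Finset.sum_comm (s := (Finset.univ : Finset (Fin d)))
            (t := (Finset.univ : Finset (Fin d)))
            (f := fun i j => if j < i then g i j else 0)]
          refine Finset.sum_congr rfl fun i _ => ?_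
          rw [Finset.sum_filter]
        rw [t1, t2, t3, add_assoc]
        refine congrArg _ ?_
        exact (Finset.sum_add_distrib).symm.trans
          (Finset.sum_congr rfl fun i _ => (Finset.sum_add_distrib).symm)

lemma count_lemma {V : Type*} [Fintype V] [DecidableEq V] (G : SimpleGraph V) {d : ℕ}
    (p : Fin d → V → ℝ) (hp : ∀ i u, p i u = 0 ∨ p i u = 1)
    (hd : ∀ u v : V, (G.dist u v : ℝ) = ∑ i, chi (p i) u v) :
    WWhat G =
      (∑ i, ((∑ u, p i u) * (∑ u, (1 - p i u)) * ((∑ u, (1 - p i u)) - 1)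
        + (∑ u, (1 - p i u)) * (∑ u, p i u) * ((∑ u, p i u) - 1)))
      + 2 * ∑ i, ∑ j ∈ Finset.univ.filter (fun j => i < j),
          brkt (∑ u, p i u * p j u) (∑ u, p i u * (1 - p j u))
            (∑ u, (1 - p i u) * p j u) (∑ u, (1 - p i u) * (1 - p j u)) := by
  classical
  have hχ0 : ∀ i (u : V), chi (p i) u u = 0 := by
    intro i u
    rcases hp i u with h | h <;> simp only [chi] <;> rw [h] <;> ring
  have hχsq : ∀ i (u v : V), chi (p i) u v * chi (p i) u v = chi (p i) u v := by
    intro i u v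
    rcases hp i u with h | h <;> rcases hp i v with h' | h' <;>
      simp only [chi] <;> rw [h, h'] <;> ring
  set T : Fin d → Fin d → ℝ :=
    fun i j => ∑ t ∈ O3 V, chi (p i) t.1 t.2.1 * chi (p j) t.1 t.2.2 with hT
  -- Step 1
  have h1 : WWhat G = ∑ i, ∑ j, T i j := by
    rw [WWhat]
    calc ∑ t ∈ O3 V, (G.dist t.1 t.2.1 : ℝ) * (G.dist t.1 t.2.2 : ℝ)
        = ∑ t ∈ O3 V, ∑ i, ∑ j, chi (p i) t.1 t.2.1 * chi (p j) t.1 t.2.2 := by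
          refine Finset.sum_congr rfl fun t _ => ?_
          rw [hd, hd, Finset.sum_mul_sum]
      _ = ∑ i, ∑ t ∈ O3 V, ∑ j, chi (p i) t.1 t.2.1 * chi (p j) t.1 t.2.2 :=
          Finset.sum_comm
      _ = ∑ i, ∑ j, T i j := by
          refine Finset.sum_congr rfl fun i _ => ?_
          rw [Finset.sum_comm]
  -- Step 2: T i j = S1 - S2
  have split : ∀ i j : Fin d,
      T i j = (∑ u, (∑ v, chi (p i) u v) * (∑ w, chi (p j) u w))
        - (∑ u, ∑ v, chi (p i) u v * chi (p j) u v) := by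
    intro i j
    set F : V × V × V → ℝ := fun t => chi (p i) t.1 t.2.1 * chi (p j) t.1 t.2.2 with hF
    set P : V × V × V → Prop := fun t => t.1 ≠ t.2.1 ∧ t.1 ≠ t.2.2 ∧ t.2.1 ≠ t.2.2 with hP
    have htot : ∑ t ∈ Finset.univ.filter P, F t
        + ∑ t ∈ Finset.univ.filter (fun t => ¬ P t), F t = ∑ t : V × V × V, F t :=
      Finset.sum_filter_add_sum_filter_not _ _ _
    have hO3 : T i j = ∑ t ∈ Finset.univ.filter P, F t := by
      rw [hT]
      rfl
    have hdegsplit : ∑ t ∈ Finset.univ.filter (fun t => ¬ P t), F t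
        = ∑ t ∈ (Finset.univ.filter (fun t => ¬ P t)).filter (fun t => t.2.1 = t.2.2), F t
          + ∑ t ∈ (Finset.univ.filter (fun t => ¬ P t)).filter (fun t => ¬ t.2.1 = t.2.2), F t :=
      (Finset.sum_filter_add_sum_filter_not _ _ _).symm
    have hzero : ∑ t ∈ (Finset.univ.filter (fun t => ¬ P t)).filter
        (fun t => ¬ t.2.1 = t.2.2), F t = 0 := by
      refine Finset.sum_eq_zero fun t ht => ?_
      simp only [Finset.mem_filter, Finset.mem_univ, true_and, hP] at ht
      obtain ⟨hnp, hvw⟩ := ht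
      push_neg at hnp
      rcases Classical.em (t.1 = t.2.1) with h | h
      · rw [hF]
        simp only
        rw [h, hχ0]
        ring
      · rcases Classical.em (t.1 = t.2.2) with h' | h'
        · rw [hF]
          simp only
          rw [h', hχ0]
          ring
        · exact absurd (hnp h h') hvw
    have hset : (Finset.univ.filter (fun t => ¬ P t)).filter (fun t : V × V × V => t.2.1 = t.2.2)
        = Finset.univ.filter (fun t : V × V × V => t.2.1 = t.2.2) := by
      ext t
      simp only [Finset.mem_filter, Finset.mem_univ, true_and, hP]
      constructor
      · rintro ⟨_, h⟩; exact h
      · intro h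
        refine ⟨fun hc => hc.2.2 h, h⟩
    have hdiagsum : ∑ t ∈ Finset.univ.filter (fun t : V × V × V => t.2.1 = t.2.2), F t
        = ∑ u, ∑ v, chi (p i) u v * chi (p j) u v := by
      rw [Finset.sum_filter, Fintype.sum_prod_type]
      refine Finset.sum_congr rfl fun u _ => ?_
      rw [Fintype.sum_prod_type]
      refine Finset.sum_congr rfl fun v _ => ?_
      rw [Finset.sum_ite_eq]
      simp [hF]
    have hfull : ∑ t : V × V × V, F t
        = ∑ u, (∑ v, chi (p i) u v) * (∑ w, chi (p j) u w) := by
      rw [Fintype.sum_prod_type]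
      refine Finset.sum_congr rfl fun u _ => ?_
      rw [Fintype.sum_prod_type]
      rw [Finset.sum_mul_sum]
    rw [hdegsplit, hzero, hset, hdiagsum, hfull] at htot
    rw [hO3]
    linarith
  -- rows
  have hrow : ∀ (i : Fin d) (u : V),
      (∑ v, chi (p i) u v) = p i u * (∑ v, (1 - p i v)) + (1 - p i u) * (∑ v, p i v) := by
    intro i u
    simp only [chi]
    rw [Finset.sum_add_distrib, ← Finset.mul_sum, ← Finset.mul_sum]
  -- diagonal value
  have hdiag : ∀ i : Fin d,
      T i i = (∑ u, p i u) * (∑ u, (1 - p i u)) * ((∑ u, (1 - p i u)) - 1)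
        + (∑ u, (1 - p i u)) * (∑ u, p i u) * ((∑ u, p i u) - 1) := by
    intro i
    set Pi : ℝ := ∑ u, p i u with hPi
    set Qi : ℝ := ∑ u, (1 - p i u) with hQi
    have hS1 : (∑ u, (∑ v, chi (p i) u v) * (∑ w, chi (p i) u w))
        = Pi * (Qi * Qi) + Qi * (Pi * Pi) := by
      calc (∑ u, (∑ v, chi (p i) u v) * (∑ w, chi (p i) u w))
          = ∑ u, (p i u * (Qi * Qi) + (1 - p i u) * (Pi * Pi)) := by
            refine Finset.sum_congr rfl fun u _ => ?_
            rw [hrow]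
            rcases hp i u with h | h <;> rw [h] <;> ring
        _ = Pi * (Qi * Qi) + Qi * (Pi * Pi) := by
            rw [Finset.sum_add_distrib, ← Finset.sum_mul, ← Finset.sum_mul, ← hPi, ← hQi]
    have hS2 : (∑ u, ∑ v, chi (p i) u v * chi (p i) u v) = Pi * Qi + Qi * Pi := by
      calc (∑ u, ∑ v, chi (p i) u v * chi (p i) u v)
          = ∑ u, (p i u * Qi + (1 - p i u) * Pi) := by
            refine Finset.sum_congr rfl fun u _ => ?_
            rw [← hrow]
            exact Finset.sum_congr rfl fun v _ => hχsq i u v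
        _ = Pi * Qi + Qi * Pi := by
            rw [Finset.sum_add_distrib, ← Finset.sum_mul, ← Finset.sum_mul, ← hPi, ← hQi]
    rw [split, hS1, hS2]
    ring
  -- off-diagonal value
  have hoff : ∀ i j : Fin d,
      T i j = gpoly (∑ u, p i u * p j u) (∑ u, p i u * (1 - p j u))
        (∑ u, (1 - p i u) * p j u) (∑ u, (1 - p i u) * (1 - p j u)) := by
    intro i j
    set a : ℝ := ∑ u, p i u * p j u with ha
    set b : ℝ := ∑ u, p i u * (1 - p j u) with hb
    set c : ℝ := ∑ u, (1 - p i u) * p j u with hc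
    set e : ℝ := ∑ u, (1 - p i u) * (1 - p j u) with he
    have hPi : (∑ u, p i u) = a + b := by
      rw [ha, hb, ← Finset.sum_add_distrib]
      refine Finset.sum_congr rfl fun u _ => by ring
    have hQi : (∑ u, (1 - p i u)) = c + e := by
      rw [hc, he, ← Finset.sum_add_distrib]
      refine Finset.sum_congr rfl fun u _ => by ring
    have hPj : (∑ u, p j u) = a + c := by
      rw [ha, hc, ← Finset.sum_add_distrib]
      refine Finset.sum_congr rfl fun u _ => by ring
    have hQj : (∑ u, (1 - p j u)) = b + e := by
      rw [hb, he, ← Finset.sum_add_distrib]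
      refine Finset.sum_congr rfl fun u _ => by ring
    have hS1 : (∑ u, (∑ v, chi (p i) u v) * (∑ w, chi (p j) u w))
        = a * ((c+e) * (b+e)) + b * ((c+e) * (a+c)) + c * ((a+b) * (b+e))
          + e * ((a+b) * (a+c)) := by
      calc (∑ u, (∑ v, chi (p i) u v) * (∑ w, chi (p j) u w))
          = ∑ u, ((p i u * p j u) * ((c+e) * (b+e))
              + (p i u * (1 - p j u)) * ((c+e) * (a+c))
              + ((1 - p i u) * p j u) * ((a+b) * (b+e))
              + ((1 - p i u) * (1 - p j u)) * ((a+b) * (a+c))) := by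
            refine Finset.sum_congr rfl fun u _ => ?_
            rw [hrow, hrow, hQi, hPi, hQj, hPj]
            rcases hp i u with h | h <;> rcases hp j u with h' | h' <;>
              rw [h, h'] <;> ring
        _ = _ := by
            rw [Finset.sum_add_distrib, Finset.sum_add_distrib, Finset.sum_add_distrib,
              ← Finset.sum_mul, ← Finset.sum_mul, ← Finset.sum_mul, ← Finset.sum_mul,
              ← ha, ← hb, ← hc, ← he]
    have hS2 : (∑ u, ∑ v, chi (p i) u v * chi (p j) u v)
        = a * e + b * c + c * b + e * a := by
      calc (∑ u, ∑ v, chi (p i) u v * chi (p j) u v)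
          = ∑ u, ((p i u * p j u) * e + (p i u * (1 - p j u)) * c
              + ((1 - p i u) * p j u) * b + ((1 - p i u) * (1 - p j u)) * a) := by
            refine Finset.sum_congr rfl fun u _ => ?_
            calc (∑ v, chi (p i) u v * chi (p j) u v)
                = ∑ v, ((p i u * p j u) * ((1 - p i v) * (1 - p j v))
                  + (p i u * (1 - p j u)) * ((1 - p i v) * p j v)
                  + ((1 - p i u) * p j u) * (p i v * (1 - p j v))
                  + ((1 - p i u) * (1 - p j u)) * (p i v * p j v)) := by
                  refine Finset.sum_congr rfl fun v _ => ?_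
                  simp only [chi]
                  ring
              _ = _ := by
                  rw [Finset.sum_add_distrib, Finset.sum_add_distrib, Finset.sum_add_distrib,
                    ← Finset.mul_sum, ← Finset.mul_sum, ← Finset.mul_sum, ← Finset.mul_sum,
                    ← ha, ← hb, ← hc, ← he]
          _ = _ := by
            rw [Finset.sum_add_distrib, Finset.sum_add_distrib, Finset.sum_add_distrib,
              ← Finset.sum_mul, ← Finset.sum_mul, ← Finset.sum_mul, ← Finset.sum_mul,
              ← ha, ← hb, ← hc, ← he]
    rw [split, hS1, hS2]
    unfold gpoly
    ring
  -- symmetry of cells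
  have hcell1 : ∀ i j : Fin d, (∑ u, p j u * p i u) = ∑ u, p i u * p j u :=
    fun i j => Finset.sum_congr rfl fun u _ => mul_comm _ _
  have hcell2 : ∀ i j : Fin d, (∑ u, p j u * (1 - p i u)) = ∑ u, (1 - p i u) * p j u :=
    fun i j => Finset.sum_congr rfl fun u _ => mul_comm _ _
  have hcell3 : ∀ i j : Fin d, (∑ u, (1 - p j u) * p i u) = ∑ u, p i u * (1 - p j u) :=
    fun i j => Finset.sum_congr rfl fun u _ => mul_comm _ _
  have hcell4 : ∀ i j : Fin d, (∑ u, (1 - p j u) * (1 - p i u))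
      = ∑ u, (1 - p i u) * (1 - p j u) :=
    fun i j => Finset.sum_congr rfl fun u _ => mul_comm _ _
  have hpair : ∀ i j : Fin d, T i j + T j i
      = 2 * brkt (∑ u, p i u * p j u) (∑ u, p i u * (1 - p j u))
          (∑ u, (1 - p i u) * p j u) (∑ u, (1 - p i u) * (1 - p j u)) := by
    intro i j
    rw [hoff i j, hoff j i, hcell1 i j, hcell2 i j, hcell3 i j, hcell4 i j]
    unfold gpoly brkt
    ring
  rw [h1, tri_split T]
  congr 1
  · exact Finset.sum_congr rfl fun i _ => hdiag i
  · rw [Finset.mul_sum]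
    refine Finset.sum_congr rfl fun i _ => ?_
    rw [Finset.mul_sum]
    exact Finset.sum_congr rfl fun j _ => (hpair i j).trans (by ring)

lemma ham_one {n : ℕ} {x y : Fin n → Bool} (h : hammingDist x y = 1) :
    ∃ m, (x m ≠ y m) ∧ ∀ m', x m' ≠ y m' → m' = m := by
  rw [ham_card, Finset.card_eq_one] at h
  obtain ⟨m, hm⟩ := h
  have hmem : ∀ j, x j ≠ y j ↔ j = m := by
    intro j
    constructor
    · intro hj
      have : j ∈ ({m} : Finset (Fin n)) := hm ▸ (by simp [hj])
      simpa using this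
    · intro hj
      subst hj
      have : j ∈ Finset.univ.filter fun j' => x j' ≠ y j' := hm ▸ (by simp)
      simpa using this
  exact ⟨m, (hmem m).2 rfl, fun m' hm' => (hmem m').1 hm'⟩

lemma ncard_sum {V : Type*} [Fintype V] [DecidableEq V] (S : Set V) (q : V → Prop)
    [DecidablePred q] (h : ∀ u, u ∈ S ↔ q u) :
    (S.ncard : ℝ) = ∑ u, if q u then (1 : ℝ) else 0 := by
  classical
  have hS : S = {u | q u} := Set.ext h
  rw [hS, Set.ncard_eq_toFinset_card', Set.toFinset_setOf, Finset.card_filter]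
  push_cast
  refine Finset.sum_congr rfl fun u _ => ?_
  split <;> simp

lemma theta_iff_coord {V : Type*} (G : SimpleGraph V) {n : ℕ} (f : V → Fin n → Bool)
    (hfd : ∀ u v, G.dist u v = hammingDist (f u) (f v))
    {u v x y : V} {k k' : Fin n}
    (hk : f u k ≠ f v k) (hku : ∀ m, f u m ≠ f v m → m = k)
    (hk' : f x k' ≠ f y k') (hk'u : ∀ m, f x m ≠ f y m → m = k') :
    theta G s(u, v) s(x, y) ↔ k = k' := by
  classical
  have δsum : ∀ a b : V, G.dist a b = ∑ m, (if f a m ≠ f b m then 1 else 0) := by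
    intro a b
    rw [hfd, ham_card, Finset.card_filter]
  have hD : (G.dist u x + G.dist v y ≠ G.dist u y + G.dist v x) ↔ k = k' := by
    constructor
    · intro hDne
      by_contra hkk
      apply hDne
      rw [δsum, δsum, δsum, δsum, ← Finset.sum_add_distrib, ← Finset.sum_add_distrib]
      refine Finset.sum_congr rfl fun m _ => ?_
      rcases Classical.em (f u m = f v m) with h | h
      · rw [← h, Nat.add_comm]
      · have hm : m = k := hku m h
        have hxy' : f x m = f y m := by
          by_contra hxyne
          exact hkk (hm ▸ hk'u m hxyne)
        rw [← hxy']
    · intro hkk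
      subst hkk
      rw [δsum, δsum, δsum, δsum, ← Finset.sum_add_distrib, ← Finset.sum_add_distrib]
      have htail : ∑ m ∈ Finset.univ.erase k,
            ((if f u m ≠ f x m then 1 else 0) + (if f v m ≠ f y m then 1 else 0))
          = ∑ m ∈ Finset.univ.erase k,
            ((if f u m ≠ f y m then 1 else 0) + (if f v m ≠ f x m then 1 else 0)) := by
        refine Finset.sum_congr rfl fun m hm => ?_
        have hmk : m ≠ k := (Finset.mem_erase.1 hm).1
        have h : f u m = f v m := by
          by_contra h
          exact hmk (hku m h)
        rw [← h, Nat.add_comm]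
      have hgen : ∀ A B C D : Bool, A ≠ B → C ≠ D →
          ((if A ≠ C then 1 else 0) + (if B ≠ D then 1 else 0) : ℕ)
            ≠ (if A ≠ D then 1 else 0) + (if B ≠ C then 1 else 0) := by decide
      have hLR := hgen (f u k) (f v k) (f x k) (f y k) hk hk'
      have e1 : ∑ m ∈ Finset.univ.erase k,
            ((if f u m ≠ f x m then 1 else 0) + (if f v m ≠ f y m then 1 else 0))
          + ((if f u k ≠ f x k then 1 else 0) + (if f v k ≠ f y k then 1 else 0))
          = ∑ m, ((if f u m ≠ f x m then 1 else 0) + (if f v m ≠ f y m then 1 else 0)) :=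
        Finset.sum_erase_add Finset.univ _ (Finset.mem_univ k)
      have e2 : ∑ m ∈ Finset.univ.erase k,
            ((if f u m ≠ f y m then 1 else 0) + (if f v m ≠ f x m then 1 else 0))
          + ((if f u k ≠ f y k then 1 else 0) + (if f v k ≠ f x k then 1 else 0))
          = ∑ m, ((if f u m ≠ f y m then 1 else 0) + (if f v m ≠ f x m then 1 else 0)) :=
        Finset.sum_erase_add Finset.univ _ (Finset.mem_univ k)
      omega
  constructor
  · rintro ⟨u1, v1, u2, v2, h1, h2, hne⟩
    rw [Sym2.eq_iff] at h1 h2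
    rcases h1 with ⟨rfl, rfl⟩ | ⟨h1a, h1b⟩ <;> rcases h2 with ⟨rfl, rfl⟩ | ⟨h2a, h2b⟩
    · exact hD.1 hne
    · subst h2a; subst h2b
      exact hD.1 (by omega)
    · subst h1a; subst h1b
      exact hD.1 (by omega)
    · subst h1a; subst h1b; subst h2a; subst h2b
      exact hD.1 (by omega)
  · intro hkk
    exact ⟨u, v, x, y, rfl, rfl, hD.2 hkk⟩

/-- Cut method for `\widehat{WW}` of a partial cube with at least three vertices. -/
theorem WWhat_partial_cube
    {V : Type*} [Fintype V] [DecidableEq V] (G : SimpleGraph V)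
    (hPC : IsPartialCube G) (hV : 3 ≤ Fintype.card V)
    (d : ℕ) (E : Fin d → Set (Sym2 V)) (U U' : Fin d → Set V)
    (hsetup : IsThetaClassSetup G d E U U') :
    WWhat G = (∑ i : Fin d,
        (((U i).ncard : ℝ) * ((U' i).ncard : ℝ) * (((U' i).ncard : ℝ) - 1)
          + ((U' i).ncard : ℝ) * ((U i).ncard : ℝ) * (((U i).ncard : ℝ) - 1)))
      + 2 * ∑ i : Fin d, ∑ j ∈ Finset.univ.filter (fun j => i < j),
          (3 * ((U i ∩ U j).ncard : ℝ) * ((U i ∩ U' j).ncard : ℝ) * ((U' i ∩ U j).ncard : ℝ)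
            + 3 * ((U i ∩ U j).ncard : ℝ) * ((U i ∩ U' j).ncard : ℝ) * ((U' i ∩ U' j).ncard : ℝ)
            + 3 * ((U i ∩ U j).ncard : ℝ) * ((U' i ∩ U j).ncard : ℝ) * ((U' i ∩ U' j).ncard : ℝ)
            + 3 * ((U i ∩ U' j).ncard : ℝ) * ((U' i ∩ U j).ncard : ℝ) * ((U' i ∩ U' j).ncard : ℝ)
            + ((U i ∩ U j).ncard : ℝ) * ((U' i ∩ U' j).ncard : ℝ) * (((U' i ∩ U' j).ncard : ℝ) - 1)
            + ((U i ∩ U' j).ncard : ℝ) * ((U' i ∩ U j).ncard : ℝ) * (((U' i ∩ U j).ncard : ℝ) - 1)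
            + ((U' i ∩ U j).ncard : ℝ) * ((U i ∩ U' j).ncard : ℝ) * (((U i ∩ U' j).ncard : ℝ) - 1)
            + ((U' i ∩ U' j).ncard : ℝ) * ((U i ∩ U j).ncard : ℝ) * (((U i ∩ U j).ncard : ℝ) - 1)) := by
  classical
  obtain ⟨hconn, n, f, hf⟩ := hPC
  obtain ⟨hrep, hinj, hcover, hcomp⟩ := hsetup
  have hfd : ∀ u v : V, G.dist u v = hammingDist (f u) (f v) := fun u v => by
    rw [← hf u v, hyper_dist]
  have adj_flip : ∀ {a b : V}, G.Adj a b →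
      ∃ m, f a m ≠ f b m ∧ ∀ m', f a m' ≠ f b m' → m' = m := by
    intro a b hab
    refine ham_one ?_
    rw [← hfd]
    exact SimpleGraph.dist_eq_one_iff_adj.2 hab
  choose e he hE using hrep
  have hxyex : ∀ i, ∃ a b, s(a, b) = e i ∧ G.Adj a b := by
    intro i
    exact Sym2.ind (f := fun s => s ∈ G.edgeSet → ∃ a b, s(a, b) = s ∧ G.Adj a b)
      (fun a b h => ⟨a, b, rfl, (G.mem_edgeSet).1 h⟩) (e i) (he i)
  choose xx yy hxye hadj using hxyex
  have hflipi : ∀ i, ∃ m, f (xx i) m ≠ f (yy i) m ∧ ∀ m', f (xx i) m' ≠ f (yy i) m' → m' = m :=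
    fun i => adj_flip (hadj i)
  choose k hk1 hk2 using hflipi
  have hmemE : ∀ (i : Fin d) (a b : V), G.Adj a b → ∀ m : Fin n, f a m ≠ f b m →
      (∀ m', f a m' ≠ f b m' → m' = m) → (s(a, b) ∈ E i ↔ m = k i) := by
    intro i a b hab m hm hmu
    rw [hE i]
    simp only [Set.mem_setOf_eq, SimpleGraph.mem_edgeSet]
    rw [← hxye i, theta_iff_coord G f hfd hm hmu (hk1 i) (hk2 i)]
    simp [hab]
  have hkinj : ∀ i j, k i = k j → i = j := by
    intro i j hij
    apply hinj
    ext g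
    induction g using Sym2.ind with
    | _ a b =>
      constructor
      · intro hg
        have hab : G.Adj a b := (G.mem_edgeSet).1 (by rw [hE i] at hg; exact hg.1)
        obtain ⟨m, hm, hmu⟩ := adj_flip hab
        exact (hmemE j a b hab m hm hmu).2 (hij ▸ (hmemE i a b hab m hm hmu).1 hg)
      · intro hg
        have hab : G.Adj a b := (G.mem_edgeSet).1 (by rw [hE j] at hg; exact hg.1)
        obtain ⟨m, hm, hmu⟩ := adj_flip hab
        exact (hmemE i a b hab m hm hmu).2 (hij.symm ▸ (hmemE j a b hab m hm hmu).1 hg)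
  have hedge_k : ∀ a b : V, G.Adj a b → ∀ m, f a m ≠ f b m →
      (∀ m', f a m' ≠ f b m' → m' = m) → ∃ i, m = k i := by
    intro a b hab m hm hmu
    have hmem : s(a, b) ∈ G.edgeSet := (G.mem_edgeSet).2 hab
    rw [hcover] at hmem
    obtain ⟨i, hi⟩ := Set.mem_iUnion.1 hmem
    exact ⟨i, (hmemE i a b hab m hm hmu).1 hi⟩
  have hkey : ∀ (u v : V) (w : G.Walk u v), w.length = hammingDist (f u) (f v) →
      ∀ m, f u m ≠ f v m → ∃ a b, G.Adj a b ∧ f a m ≠ f b m := by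
    intro u v w
    induction w with
    | nil => exact fun _ m hm => absurd rfl hm
    | @cons a b c hab w ih =>
      intro hlen m hm
      have h1 : hammingDist (f a) (f b) = 1 := by
        rw [← hfd]
        exact SimpleGraph.dist_eq_one_iff_adj.2 hab
      have h2 : hammingDist (f b) (f c) ≤ w.length := by
        rw [← hfd]
        exact SimpleGraph.dist_le w
      have h3 : hammingDist (f a) (f c) ≤ hammingDist (f a) (f b) + hammingDist (f b) (f c) :=
        hammingDist_triangle _ _ _
      have hlen' : w.length = hammingDist (f b) (f c) := by
        simp only [SimpleGraph.Walk.length_cons] at hlen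
        omega
      rcases Classical.em (f b m = f c m) with hbc | hbc
      · exact ⟨a, b, hab, fun h => hm (h.trans hbc)⟩
      · exact ih hlen' m hbc
  have hdist_card : ∀ u v : V,
      G.dist u v = (Finset.univ.filter fun i : Fin d => f u (k i) ≠ f v (k i)).card := by
    intro u v
    rw [hfd, ham_card]
    refine (Finset.card_bij (fun i _ => k i) ?_ ?_ ?_).symm
    · intro i hi
      simp only [Finset.mem_filter, Finset.mem_univ, true_and] at hi ⊢
      exact hi
    · intro i _ j _ hij
      exact hkinj i j hij
    · intro m hm
      simp only [Finset.mem_filter, Finset.mem_univ, true_and] at hm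
      obtain ⟨w, hw⟩ := (hconn u v).exists_walk_length_eq_dist
      obtain ⟨a, b, hab, hfab⟩ := hkey u v w (by rw [hw, hfd]) m hm
      obtain ⟨mm, hmm, hmmu⟩ := adj_flip hab
      obtain ⟨i, hi⟩ := hedge_k a b hab mm hmm hmmu
      have hki : k i = m := by rw [← hi]; exact (hmmu m hfab).symm
      refine ⟨i, ?_, hki⟩
      simp only [Finset.mem_filter, Finset.mem_univ, true_and]
      rw [hki]
      exact hm
  have hchar : ∀ i : Fin d, ∃ β : Bool,
      (∀ u, u ∈ U i ↔ f u (k i) = β) ∧ (∀ u, u ∈ U' i ↔ ¬ f u (k i) = β) := by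
    intro i
    obtain ⟨c, c', hcc, hUi, hU'i, hall⟩ := hcomp i
    have hconst : ∀ (a b : V) (w : (G.deleteEdges (E i)).Walk a b), f a (k i) = f b (k i) := by
      intro a b w
      induction w with
      | nil => rfl
      | @cons a b c hadj w ih =>
        have hG : G.Adj a b := (SimpleGraph.deleteEdges_adj.1 hadj).1
        have hnotin : s(a, b) ∉ E i := (SimpleGraph.deleteEdges_adj.1 hadj).2
        have hstep : f a (k i) = f b (k i) := by
          by_contra hne
          obtain ⟨m, hm, hmu⟩ := adj_flip hG
          exact hnotin ((hmemE i a b hG m hm hmu).2 (hmu _ hne).symm)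
        exact hstep.trans ih
    have hreach : ∀ a b : V, (G.deleteEdges (E i)).Reachable a b → f a (k i) = f b (k i) := by
      intro a b hr
      obtain ⟨w⟩ := hr
      exact hconst a b w
    have hxyne : (G.deleteEdges (E i)).connectedComponentMk (xx i)
        ≠ (G.deleteEdges (E i)).connectedComponentMk (yy i) := by
      intro h
      exact hk1 i (hreach _ _ (SimpleGraph.ConnectedComponent.exact h))
    have key : ∀ (z z' : V),
        f z (k i) ≠ f z' (k i) →
        U i = ((G.deleteEdges (E i)).connectedComponentMk z).supp →
        U' i = ((G.deleteEdges (E i)).connectedComponentMk z').supp →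
        (∀ u : V, (G.deleteEdges (E i)).connectedComponentMk u
            = (G.deleteEdges (E i)).connectedComponentMk z
          ∨ (G.deleteEdges (E i)).connectedComponentMk u
            = (G.deleteEdges (E i)).connectedComponentMk z') →
        ∃ β : Bool, (∀ u, u ∈ U i ↔ f u (k i) = β) ∧ (∀ u, u ∈ U' i ↔ ¬ f u (k i) = β) := by
      intro z z' hne hUz hU'z hallz
      refine ⟨f z (k i), fun u => ⟨fun hu => ?_, fun hu => ?_⟩,
        fun u => ⟨fun hu => ?_, fun hu => ?_⟩⟩
      · rw [hUz, SimpleGraph.ConnectedComponent.mem_supp_iff] at hu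
        exact hreach u z (SimpleGraph.ConnectedComponent.exact hu)
      · rcases hallz u with h | h
        · rw [hUz, SimpleGraph.ConnectedComponent.mem_supp_iff]
          exact h
        · exact absurd (hu.symm.trans (hreach u z' (SimpleGraph.ConnectedComponent.exact h))) hne
      · rw [hU'z, SimpleGraph.ConnectedComponent.mem_supp_iff] at hu
        have hz' := hreach u z' (SimpleGraph.ConnectedComponent.exact hu)
        intro hb
        exact hne (hb.symm.trans hz')
      · rcases hallz u with h | h
        · exact absurd (hreach u z (SimpleGraph.ConnectedComponent.exact h)) hu
        · rw [hU'z, SimpleGraph.ConnectedComponent.mem_supp_iff]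
          exact h
    rcases hall ((G.deleteEdges (E i)).connectedComponentMk (xx i)) with hcx | hcx
    · rcases hall ((G.deleteEdges (E i)).connectedComponentMk (yy i)) with hcy | hcy
      · exact absurd (hcx.trans hcy.symm) hxyne
      · refine key (xx i) (yy i) (hk1 i) (by rw [hUi, ← hcx]) (by rw [hU'i, ← hcy]) ?_
        intro u
        rcases hall ((G.deleteEdges (E i)).connectedComponentMk u) with h | h
        · exact Or.inl (h.trans hcx.symm)
        · exact Or.inr (h.trans hcy.symm)
    · rcases hall ((G.deleteEdges (E i)).connectedComponentMk (yy i)) with hcy | hcy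
      · refine key (yy i) (xx i) (Ne.symm (hk1 i)) (by rw [hUi, ← hcy]) (by rw [hU'i, ← hcx]) ?_
        intro u
        rcases hall ((G.deleteEdges (E i)).connectedComponentMk u) with h | h
        · exact Or.inl (h.trans hcy.symm)
        · exact Or.inr (h.trans hcx.symm)
      · exact absurd (hcx.trans hcy.symm) hxyne
  choose β hβ1 hβ2 using hchar
  have hbool : ∀ s t bb : Bool, ¬ s = bb → ¬ t = bb → s = t := by decide
  set p : Fin d → V → ℝ := fun i u => if f u (k i) = β i then 1 else 0 with hpdef
  have hp : ∀ i u, p i u = 0 ∨ p i u = 1 := by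
    intro i u
    by_cases h : f u (k i) = β i <;> simp [hpdef, h]
  have hterm : ∀ (i : Fin d) (u v : V),
      chi (p i) u v = if f u (k i) ≠ f v (k i) then (1 : ℝ) else 0 := by
    intro i u v
    by_cases h1 : f u (k i) = β i <;> by_cases h2 : f v (k i) = β i <;>
      simp only [chi, hpdef]
    · have hh : ¬ f u (k i) ≠ f v (k i) := by simp [h1.trans h2.symm]
      rw [if_pos h1, if_pos h2, if_neg hh]
      norm_num
    · have hh : f u (k i) ≠ f v (k i) := fun h => h2 (h.symm.trans h1)
      rw [if_pos h1, if_neg h2, if_pos hh]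
      norm_num
    · have hh : f u (k i) ≠ f v (k i) := fun h => h1 (h.trans h2)
      rw [if_neg h1, if_pos h2, if_pos hh]
      norm_num
    · have hh : ¬ f u (k i) ≠ f v (k i) := by simp [hbool _ _ _ h1 h2]
      rw [if_neg h1, if_neg h2, if_neg hh]
      norm_num
  have hd2 : ∀ u v : V, (G.dist u v : ℝ) = ∑ i, chi (p i) u v := by
    intro u v
    rw [hdist_card u v, Finset.card_filter]
    push_cast
    refine Finset.sum_congr rfl fun i _ => ?_
    rw [hterm]
  have hPsum : ∀ i, ((U i).ncard : ℝ) = ∑ u, p i u := by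
    intro i
    rw [ncard_sum (U i) (fun u => f u (k i) = β i) (hβ1 i)]
  have hQsum : ∀ i, ((U' i).ncard : ℝ) = ∑ u, (1 - p i u) := by
    intro i
    rw [ncard_sum (U' i) (fun u => ¬ f u (k i) = β i) (hβ2 i)]
    refine Finset.sum_congr rfl fun u _ => ?_
    by_cases h : f u (k i) = β i <;> simp [hpdef, h]
  have hAsum : ∀ i j, ((U i ∩ U j).ncard : ℝ) = ∑ u, p i u * p j u := by
    intro i j
    rw [ncard_sum (U i ∩ U j) (fun u => f u (k i) = β i ∧ f u (k j) = β j)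
      (fun u => (Set.mem_inter_iff u _ _).trans (and_congr (hβ1 i u) (hβ1 j u)))]
    refine Finset.sum_congr rfl fun u _ => ?_
    by_cases h1 : f u (k i) = β i <;> by_cases h2 : f u (k j) = β j <;>
      simp [hpdef, h1, h2]
  have hBsum : ∀ i j, ((U i ∩ U' j).ncard : ℝ) = ∑ u, p i u * (1 - p j u) := by
    intro i j
    rw [ncard_sum (U i ∩ U' j) (fun u => f u (k i) = β i ∧ ¬ f u (k j) = β j)
      (fun u => (Set.mem_inter_iff u _ _).trans (and_congr (hβ1 i u) (hβ2 j u)))]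
    refine Finset.sum_congr rfl fun u _ => ?_
    by_cases h1 : f u (k i) = β i <;> by_cases h2 : f u (k j) = β j <;>
      simp [hpdef, h1, h2]
  have hCsum : ∀ i j, ((U' i ∩ U j).ncard : ℝ) = ∑ u, (1 - p i u) * p j u := by
    intro i j
    rw [ncard_sum (U' i ∩ U j) (fun u => ¬ f u (k i) = β i ∧ f u (k j) = β j)
      (fun u => (Set.mem_inter_iff u _ _).trans (and_congr (hβ2 i u) (hβ1 j u)))]
    refine Finset.sum_congr rfl fun u _ => ?_
    by_cases h1 : f u (k i) = β i <;> by_cases h2 : f u (k j) = β j <;>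
      simp [hpdef, h1, h2]
  have hEsum : ∀ i j, ((U' i ∩ U' j).ncard : ℝ) = ∑ u, (1 - p i u) * (1 - p j u) := by
    intro i j
    rw [ncard_sum (U' i ∩ U' j) (fun u => ¬ f u (k i) = β i ∧ ¬ f u (k j) = β j)
      (fun u => (Set.mem_inter_iff u _ _).trans (and_congr (hβ2 i u) (hβ2 j u)))]
    refine Finset.sum_congr rfl fun u _ => ?_
    by_cases h1 : f u (k i) = β i <;> by_cases h2 : f u (k j) = β j <;>
      simp [hpdef, h1, h2]
  rw [count_lemma G p hp hd2]
  congr 1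
  · refine Finset.sum_congr rfl fun i _ => ?_
    rw [hPsum i, hQsum i]
  · refine congrArg _ (Finset.sum_congr rfl fun i _ => Finset.sum_congr rfl fun j _ => ?_)
    rw [hAsum i j, hBsum i j, hCsum i j, hEsum i j]
    unfold brkt
    ring
end
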